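/- arXiv:1708.08424 — 6 statements merged into one kernel-verified Lean document; each statement's English description precedes it below -/
import Mathlib

section
/- Let N, k, T be positive integers with k ≤ √N and 2k ≤ T ≤ N/k. There exists an algorithm A making at most T oracle queries to a random function h : [N] → [N] such that the probability (over uniform h and uniform x ∈ [N]) that A, on input h^(k)(x), outputs a point z with h(z) = h^(k)(x) is at least Ω(Tk/N). -/
/-!
The algorithm walks `2k` steps of `h` from each of `M ≈ T / (8k)` fixed starting points and stops
when it sees `y = h^[k] x`. It succeeds whenever the orbit of `x`, after `j ≤ k` steps, merges into
the orbit of a start `a` at `h^[j'] a` with `j' ≤ k`, because then `h^[k] x = h^[k - j + j'] a`.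
For a fixed start, the possible merge configurations (`j`, `j'` and the `2k + j` distinct points
involved) are disjoint cylinders of functions of total measure about `k² / N`. Resampling `h` at
the last point before an entry shows that the orbit of another start enters a given configuration
within `k` steps with probability at most `3k² / N`. Hence, as long as `M k² ≲ N`, the events for
different starts are almost disjoint, and the success probability is `≳ M k² / N ≈ T k / N`. When
`N < 64 k` the trivial algorithm, which succeeds whenever `h x = x`, is good enough.
-/

/-- An oracle algorithm (decision tree) with oracle access to a single
function `[N] → [N]`: it either outputs an answer, or queries the oracle at a
point and continues depending on the reply. -/
inductive OracleAlg (N : ℕ) : Type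
  | output : Fin N → OracleAlg N
  | query : Fin N → (Fin N → OracleAlg N) → OracleAlg N

namespace OracleAlg

/-- Run the algorithm with oracle `h`. -/
def run {N : ℕ} : OracleAlg N → (Fin N → Fin N) → Fin N
  | output z, _ => z
  | query x cont, h => run (cont (h x)) h

/-- The maximal number of oracle queries made on any execution path. -/
def numQueries {N : ℕ} : OracleAlg N → ℕ
  | output _ => 0
  | query _ cont => 1 + Finset.univ.sup fun y => numQueries (cont y)

end OracleAlg

open Finset Function

def chainPairs {α : Type*} (v : ℕ → α) (n : ℕ) : List (α × α) :=
  (List.range n).map fun i => (v i, v (i + 1))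

theorem chainPairs_map_fst {α : Type*} (v : ℕ → α) (n : ℕ) :
    (chainPairs v n).map Prod.fst = (List.range n).map v := by
  simp [chainPairs, Function.comp_def]

theorem length_chainPairs {α : Type*} (v : ℕ → α) (n : ℕ) : (chainPairs v n).length = n := by
  simp [chainPairs]

section Cylinder

variable {α β : Type*} [Fintype α] [DecidableEq α] [Fintype β] [DecidableEq β]

def cylinder (L : List (α × β)) : Finset (α → β) :=
  univ.filter fun h => ∀ p ∈ L, h p.1 = p.2

theorem mem_cylinder {L : List (α × β)} {h : α → β} :
    h ∈ cylinder L ↔ ∀ p ∈ L, h p.1 = p.2 := by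
  simp [cylinder]

theorem card_cylinder {L : List (α × β)} (hL : (L.map Prod.fst).Nodup) :
    #(cylinder L) = Fintype.card β ^ (Fintype.card α - L.length) := by
  set K := L.map Prod.fst
  set allowed : α → Finset β := fun x => univ.filter fun v => ∀ p ∈ L, p.1 = x → v = p.2
  have hpi : cylinder L = Fintype.piFinset allowed := by
    ext h
    simp only [mem_cylinder, Fintype.mem_piFinset, allowed, mem_filter, mem_univ, true_and]
    exact ⟨fun hh x p hp hpx => hpx ▸ hh p hp, fun hh p hp => hh p.1 p hp rfl⟩
  have hcard : ∀ x, #(allowed x) = if x ∈ K then 1 else Fintype.card β := by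
    intro x
    split_ifs with hx
    · obtain ⟨p, hp, rfl⟩ := List.mem_map.mp hx
      rw [card_eq_one]
      refine ⟨p.2, eq_singleton_iff_unique_mem.mpr ⟨mem_filter.mpr ⟨mem_univ _, ?_⟩, ?_⟩⟩
      · intro q hq hqp
        rw [List.inj_on_of_nodup_map hL hp hq hqp.symm]
      · exact fun v hv => (mem_filter.mp hv).2 p hp rfl
    · refine (card_univ (α := β)) ▸ congrArg card (filter_true_of_mem fun v _ p hp hpx => ?_)
      exact absurd (hpx ▸ List.mem_map_of_mem hp) hx
  rw [hpi, Fintype.card_piFinset, prod_congr rfl fun x _ => hcard x, prod_ite, prod_const_one,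
    one_mul, prod_const, filter_not, card_sdiff_of_subset (subset_univ _), card_univ,
    ← List.length_map Prod.fst, ← List.toFinset_card_of_nodup hL]
  congr 3
  ext x
  simp [K]

theorem mem_cylinder_append {L₁ L₂ : List (α × β)} {h : α → β} :
    h ∈ cylinder (L₁ ++ L₂) ↔ h ∈ cylinder L₁ ∧ h ∈ cylinder L₂ := by
  simp only [mem_cylinder, List.mem_append, or_imp, forall_and]

theorem update_mem_cylinder {L : List (α × β)} {h : α → β} (hh : h ∈ cylinder L) {w : α}
    (hw : w ∉ L.map Prod.fst) (v : β) : update h w v ∈ cylinder L := by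
  refine mem_cylinder.mpr fun p hp => ?_
  rw [update_of_ne fun he : p.1 = w => hw (he ▸ List.mem_map_of_mem hp)]
  exact mem_cylinder.mp hh p hp

theorem iterate_eq_of_mem_cylinder_chainPairs {v : ℕ → α} {n : ℕ} {h : α → α}
    (hh : h ∈ cylinder (chainPairs v n)) {i : ℕ} (hi : i ≤ n) : h^[i] (v 0) = v i := by
  induction i with
  | zero => rfl
  | succ i ih =>
    rw [iterate_succ_apply', ih (by omega)]
    exact mem_cylinder.mp hh (v i, v (i + 1)) (List.mem_map.mpr ⟨i, List.mem_range.mpr hi, rfl⟩)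

end Cylinder

theorem iterate_update_eq_of_forall_ne {α : Type*} [DecidableEq α] {f : α → α} {s w : α} {i : ℕ}
    (hne : ∀ j < i, f^[j] s ≠ w) (v : α) : (update f w v)^[i] s = f^[i] s := by
  induction i with
  | zero => rfl
  | succ i ih =>
    rw [iterate_succ_apply', iterate_succ_apply', ih fun j hj => hne j (by omega),
      update_of_ne (hne i (by omega))]

section Hitting

variable {α : Type*} [Fintype α] [DecidableEq α]

/-- Resampling `h` at the last point `h^[t] s` before the first entry into `K` shows that the
entry happens at time `t + 1` for at most a `#K / card α` fraction of `C`. -/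
theorem card_filter_firstEntry_mul_le {K : Finset α} {C : Finset (α → α)}
    (hC : ∀ h ∈ C, ∀ w ∉ K, ∀ v, update h w v ∈ C) (s : α) (t : ℕ) :
    #(C.filter fun h => (∀ i ≤ t, h^[i] s ∉ K) ∧ h^[t + 1] s ∈ K) * Fintype.card α ≤
      #C * #K := by
  set F := C.filter fun h => (∀ i ≤ t, h^[i] s ∉ K) ∧ h^[t + 1] s ∈ K
  have hloopfree : ∀ h ∈ F, ∀ j < t, h^[j] s ≠ h^[t] s := by
    intro h hh j hj he
    have hent := (mem_filter.mp hh).2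
    refine hent.1 (j + 1) (by omega) ?_
    rw [iterate_succ_apply', he, ← iterate_succ_apply' h t]
    exact hent.2
  rw [← card_univ, ← card_product, ← card_product]
  refine card_le_card_of_injOn (fun q => (update q.1 (q.1^[t] s) q.2, q.1^[t + 1] s)) ?_ ?_
  · rintro ⟨h, v⟩ hq
    obtain ⟨hhC, hent⟩ := mem_filter.mp (mem_product.mp hq).1
    exact mem_product.mpr ⟨hC h hhC _ (hent.1 t le_rfl) v, hent.2⟩
  · rintro ⟨h₁, v₁⟩ hq₁ ⟨h₂, v₂⟩ hq₂ he
    obtain ⟨hg, hc⟩ := Prod.mk.inj he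
    have hw₁ := iterate_update_eq_of_forall_ne (hloopfree h₁ (mem_product.mp hq₁).1) v₁
    have hw₂ := iterate_update_eq_of_forall_ne (hloopfree h₂ (mem_product.mp hq₂).1) v₂
    simp only at hg hc hw₁ hw₂
    have hw : h₁^[t] s = h₂^[t] s := by rw [← hw₁, ← hw₂, hg]
    rw [iterate_succ_apply', iterate_succ_apply'] at hc
    have hv : v₁ = v₂ := by
      simpa only [update_self, hw] using congrFun hg (h₁^[t] s)
    have hrestore : ∀ (h : α → α) w v, update (update h w v) w (h w) = h := by simp
    have hh : h₁ = h₂ :=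
      calc h₁ = update (update h₁ (h₁^[t] s) v₁) (h₁^[t] s) (h₁ (h₁^[t] s)) := (hrestore ..).symm
        _ = update (update h₂ (h₂^[t] s) v₂) (h₂^[t] s) (h₂ (h₂^[t] s)) := by rw [hg, hc, hw]
        _ = h₂ := hrestore ..
    rw [hh, hv]

theorem card_filter_exists_iterate_mem_mul_le {K : Finset α} {C : Finset (α → α)}
    (hC : ∀ h ∈ C, ∀ w ∉ K, ∀ v, update h w v ∈ C) {s : α} (hs : s ∉ K) (k : ℕ) :
    #(C.filter fun h => ∃ t ∈ Icc (1 : ℕ) k, h^[t] s ∈ K) * Fintype.card α ≤ k * (#C * #K) := by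
  set F := fun t => C.filter fun h => (∀ i ≤ t, h^[i] s ∉ K) ∧ h^[t + 1] s ∈ K
  have hsub : (C.filter fun h => ∃ t ∈ Icc (1 : ℕ) k, h^[t] s ∈ K) ⊆ (range k).biUnion F := by
    intro h hh
    obtain ⟨hhC, t₀, ht₀, hmem⟩ := mem_filter.mp hh
    have hex : ∃ t, h^[t + 1] s ∈ K := ⟨t₀ - 1, by rwa [Nat.sub_add_cancel (mem_Icc.mp ht₀).1]⟩
    have hfirst : ∀ i ≤ Nat.find hex, h^[i] s ∉ K := by
      rintro (_ | i) hi
      · exact hs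
      · exact Nat.find_min hex (by omega)
    have hle : Nat.find hex < k :=
      (Nat.find_min' hex (by rwa [Nat.sub_add_cancel (mem_Icc.mp ht₀).1])).trans_lt
        (by have := mem_Icc.mp ht₀; omega)
    exact mem_biUnion.mpr ⟨_, mem_range.mpr hle, mem_filter.mpr ⟨hhC, hfirst, Nat.find_spec hex⟩⟩
  calc #(C.filter fun h => ∃ t ∈ Icc (1 : ℕ) k, h^[t] s ∈ K) * Fintype.card α
      ≤ (∑ t ∈ range k, #(F t)) * Fintype.card α :=
        Nat.mul_le_mul_right _ ((card_le_card hsub).trans card_biUnion_le)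
    _ = ∑ t ∈ range k, #(F t) * Fintype.card α := sum_mul _ _ _
    _ ≤ ∑ _t ∈ range k, #C * #K := sum_le_sum fun t _ => card_filter_firstEntry_mul_le hC s t
    _ = k * (#C * #K) := by rw [sum_const, card_range, smul_eq_mul]

end Hitting

section Shapes

variable {α : Type*}

/-- A configuration in which the orbit of `x` runs through `j = jj.1 + 1` new points and then
joins the orbit of a start `a` at `h^[j'] a`, where `j' = jj.2 + 1`. The embedding lists the
`2k + j` points outside `S` involved: `h a, …, h^[2k] a`, then `x, h x, …, h^[j - 1] x`. -/
abbrev Shape (S : Finset α) (k : ℕ) : Type _ :=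
  Σ jj : Fin k × Fin k, Fin (2 * k + (jj.1 + 1)) ↪ {z // z ∉ S}

namespace Shape

variable {S : Finset α} {k : ℕ} (σ : Shape S k) (a : α)

def j : ℕ := σ.1.1 + 1

def j' : ℕ := σ.1.2 + 1

def len : ℕ := 2 * k + σ.j

def fresh (i : ℕ) : α := if hi : i < σ.len then (σ.2 ⟨i, hi⟩).1 else a

def startPath (i : ℕ) : α := if i = 0 then a else σ.fresh a (i - 1)

def tailPath (i : ℕ) : α := if i < σ.j then σ.fresh a (2 * k + i) else σ.fresh a (σ.j' - 1)

def constraints : List (α × α) :=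
  chainPairs (σ.startPath a) (2 * k) ++ chainPairs (σ.tailPath a) σ.j

theorem j_pos : 0 < σ.j := Nat.succ_pos _

theorem j_le : σ.j ≤ k := σ.1.1.isLt

theorem j'_pos : 0 < σ.j' := Nat.succ_pos _

theorem j'_le : σ.j' ≤ k := σ.1.2.isLt

theorem len_le : σ.len ≤ 3 * k := by
  have := σ.j_le; unfold len; omega

variable {σ a}

theorem fresh_of_lt {i : ℕ} (hi : i < σ.len) : σ.fresh a i = (σ.2 ⟨i, hi⟩).1 := dif_pos hi

theorem fresh_not_mem {i : ℕ} (hi : i < σ.len) : σ.fresh a i ∉ S := by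
  rw [fresh_of_lt hi]; exact (σ.2 _).2

theorem fresh_inj {i i' : ℕ} (hi : i < σ.len) (hi' : i' < σ.len)
    (he : σ.fresh a i = σ.fresh a i') : i = i' := by
  rw [fresh_of_lt hi, fresh_of_lt hi'] at he
  exact Fin.mk.inj_iff.mp (σ.2.injective (Subtype.ext he))

theorem ext_of_fresh {σ τ : Shape S k} (hj : σ.j = τ.j) (hj' : σ.j' = τ.j')
    (hf : ∀ i < σ.len, σ.fresh a i = τ.fresh a i) : σ = τ := by
  obtain ⟨⟨j₁, j₁'⟩, e⟩ := σ
  obtain ⟨⟨j₂, j₂'⟩, f⟩ := τ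
  obtain rfl : j₁ = j₂ := Fin.ext (Nat.succ_injective hj)
  obtain rfl : j₁' = j₂' := Fin.ext (Nat.succ_injective hj')
  refine Sigma.ext rfl (heq_of_eq (Embedding.ext fun i => Subtype.ext ?_))
  have := hf i i.isLt
  rwa [fresh_of_lt i.isLt, fresh_of_lt (σ := ⟨(j₁, j₁'), f⟩) i.isLt] at this

variable (σ a)

theorem keys_eq : (σ.constraints a).map Prod.fst =
    (List.range (2 * k)).map (σ.startPath a) ++ (List.range σ.j).map (σ.tailPath a) := by
  rw [constraints, List.map_append, chainPairs_map_fst, chainPairs_map_fst]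

theorem length_constraints : (σ.constraints a).length = σ.len := by
  rw [constraints, List.length_append, length_chainPairs, length_chainPairs, len]

variable {σ a}

theorem eq_or_not_mem_of_mem_keys {z : α} (hz : z ∈ (σ.constraints a).map Prod.fst) :
    z = a ∨ z ∉ S := by
  rw [keys_eq, List.mem_append, List.mem_map, List.mem_map] at hz
  rcases hz with ⟨i, hi, rfl⟩ | ⟨i, hi, rfl⟩ <;> rw [List.mem_range] at hi
  · unfold startPath
    split_ifs
    · exact Or.inl rfl
    · exact Or.inr (fresh_not_mem (by unfold len; omega))
  · exact Or.inr (by rw [tailPath, if_pos hi]; exact fresh_not_mem (by unfold len; omega))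

theorem nodup_keys (ha : a ∈ S) : ((σ.constraints a).map Prod.fst).Nodup := by
  have hstart : ∀ i < 2 * k, ∀ i' < 2 * k, σ.startPath a i = σ.startPath a i' → i = i' := by
    intro i hi i' hi' he
    unfold startPath at he
    split_ifs at he with h₁ h₂ h₂
    · omega
    · exact absurd (he ▸ ha) (fresh_not_mem (by unfold len; omega))
    · exact absurd (he ▸ ha) (fresh_not_mem (by unfold len; omega))
    · have := fresh_inj (by unfold len; omega) (by unfold len; omega) he; omega
  have htail : ∀ i < σ.j, σ.tailPath a i = σ.fresh a (2 * k + i) := fun i hi => if_pos hi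
  rw [keys_eq, List.nodup_append]
  refine ⟨List.nodup_range.map_on fun i hi i' hi' => hstart i (List.mem_range.mp hi) i'
      (List.mem_range.mp hi'),
    List.nodup_range.map_on fun i hi i' hi' he => ?_, ?_⟩
  · rw [htail i (List.mem_range.mp hi), htail i' (List.mem_range.mp hi')] at he
    have := fresh_inj (by unfold len; have := List.mem_range.mp hi; omega)
      (by unfold len; have := List.mem_range.mp hi'; omega) he
    omega
  · simp only [List.mem_map, List.mem_range]
    rintro _ ⟨i, hi, rfl⟩ _ ⟨i', hi', rfl⟩ he
    rw [htail i' hi'] at he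
    unfold startPath at he
    split_ifs at he
    · exact fresh_not_mem (by unfold len; omega) (he ▸ ha)
    · have := fresh_inj (by unfold len; omega) (by unfold len; omega) he; omega

variable [Fintype α] [DecidableEq α] (σ a)

def cell : Finset ((α → α) × α) :=
  cylinder (σ.constraints a) ×ˢ {σ.fresh a (2 * k)}

variable {σ a}

theorem mem_cell {p : (α → α) × α} :
    p ∈ σ.cell a ↔ p.1 ∈ cylinder (σ.constraints a) ∧ p.2 = σ.fresh a (2 * k) := by
  rw [cell, mem_product, mem_singleton]

theorem card_cell (ha : a ∈ S) :
    #(σ.cell a) = Fintype.card α ^ (Fintype.card α - σ.len) := by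
  rw [cell, card_product, card_singleton, mul_one, card_cylinder (nodup_keys ha),
    length_constraints]

section Iterates

variable {h : α → α} (hh : h ∈ cylinder (σ.constraints a))
include hh

theorem iterate_start {i : ℕ} (hi : i ≤ 2 * k) : h^[i] a = σ.startPath a i := by
  have := iterate_eq_of_mem_cylinder_chainPairs (mem_cylinder_append.mp hh).1 hi
  rwa [startPath, if_pos rfl] at this

theorem iterate_start_succ {i : ℕ} (hi : i < 2 * k) : h^[i + 1] a = σ.fresh a i := by
  rw [iterate_start hh (by omega), startPath, if_neg (by omega), Nat.add_sub_cancel]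

theorem iterate_tail {i : ℕ} (hi : i ≤ σ.j) : h^[i] (σ.fresh a (2 * k)) = σ.tailPath a i := by
  have := iterate_eq_of_mem_cylinder_chainPairs (mem_cylinder_append.mp hh).2 hi
  rwa [tailPath, if_pos σ.j_pos, add_zero] at this

theorem iterate_j : h^[σ.j] (σ.fresh a (2 * k)) = σ.fresh a (σ.j' - 1) := by
  rw [iterate_tail hh le_rfl, tailPath, if_neg (lt_irrefl _)]

theorem iterate_j_add (r : ℕ) : h^[σ.j + r] (σ.fresh a (2 * k)) = h^[σ.j' + r] a := by
  have hj' : h^[σ.j'] a = σ.fresh a (σ.j' - 1) := by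
    have := iterate_start_succ hh (i := σ.j' - 1) (by have := σ.j'_le; have := σ.j'_pos; omega)
    rwa [Nat.sub_add_cancel σ.j'_pos] at this
  rw [add_comm σ.j, add_comm σ.j', iterate_add_apply, iterate_add_apply, iterate_j hh, hj']

theorem iterate_k : h^[k] (σ.fresh a (2 * k)) = h^[k - σ.j + σ.j'] a := by
  have := iterate_j_add hh (k - σ.j)
  rwa [Nat.add_sub_cancel' σ.j_le, add_comm σ.j'] at this

theorem iterate_mem_keys {t : ℕ} (ht : t ∈ Icc 1 k) :
    h^[t] (σ.fresh a (2 * k)) ∈ (σ.constraints a).map Prod.fst := by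
  obtain ⟨ht₁, htk⟩ := mem_Icc.mp ht
  rw [keys_eq, List.mem_append, List.mem_map, List.mem_map]
  by_cases htj : t < σ.j
  · exact Or.inr ⟨t, List.mem_range.mpr htj, (iterate_tail hh htj.le).symm⟩
  · refine Or.inl ⟨σ.j' + (t - σ.j), List.mem_range.mpr ?_, ?_⟩
    · have := σ.j'_le; have := σ.j_pos; omega
    · rw [← iterate_start hh (by have := σ.j'_le; omega), ← iterate_j_add hh,
        Nat.add_sub_cancel' (not_lt.mp htj)]

end Iterates

section Cells

variable {σ τ : Shape S k} {p : (α → α) × α} (hσ : p ∈ σ.cell a) (hτ : p ∈ τ.cell a)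
include hσ hτ

theorem fresh_eq_of_mem_cell {i : ℕ} (hi : i < 2 * k) : σ.fresh a i = τ.fresh a i := by
  rw [← iterate_start_succ (mem_cell.mp hσ).1 hi, ← iterate_start_succ (mem_cell.mp hτ).1 hi]

theorem j_le_of_mem_cell : σ.j ≤ τ.j := by
  obtain ⟨hσ₁, hσ₂⟩ := mem_cell.mp hσ
  obtain ⟨hτ₁, hτ₂⟩ := mem_cell.mp hτ
  by_contra! hlt
  have := τ.j'_le
  have := τ.j'_pos
  have hviaσ : p.1^[τ.j] p.2 = σ.fresh a (2 * k + τ.j) := by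
    rw [hσ₂, iterate_tail hσ₁ hlt.le, tailPath, if_pos hlt]
  have hviaτ : p.1^[τ.j] p.2 = σ.fresh a (τ.j' - 1) := by
    rw [hτ₂, iterate_j hτ₁, fresh_eq_of_mem_cell hσ hτ (by omega)]
  have := fresh_inj (by unfold len; omega) (by unfold len; omega) (hviaσ.symm.trans hviaτ)
  omega

/-- The orbit of `x` first meets that of `a` after exactly `j` steps, at `h^[j'] a`. -/
theorem eq_of_mem_cell : σ = τ := by
  obtain ⟨hσ₁, hσ₂⟩ := mem_cell.mp hσ
  obtain ⟨hτ₁, hτ₂⟩ := mem_cell.mp hτ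
  have hj : σ.j = τ.j := (j_le_of_mem_cell hσ hτ).antisymm (j_le_of_mem_cell hτ hσ)
  have hj' : σ.j' = τ.j' := by
    have := σ.j'_le
    have := τ.j'_le
    have := σ.j'_pos
    have := τ.j'_pos
    have he : σ.fresh a (σ.j' - 1) = σ.fresh a (τ.j' - 1) := by
      rw [← iterate_j hσ₁, ← hσ₂, hτ₂, hj, iterate_j hτ₁,
        fresh_eq_of_mem_cell hσ hτ (by omega)]
    have := fresh_inj (by unfold len; omega) (by unfold len; omega) he
    omega
  refine ext_of_fresh (a := a) hj hj' fun i hi => ?_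
  by_cases hik : i < 2 * k
  · exact fresh_eq_of_mem_cell hσ hτ hik
  · have ht : i - 2 * k < σ.j := by unfold len at hi; omega
    have hσi := iterate_tail hσ₁ ht.le
    have hτi := iterate_tail hτ₁ (hj ▸ ht).le
    rw [tailPath, if_pos ht, Nat.add_sub_cancel' (not_lt.mp hik), ← hσ₂] at hσi
    rw [tailPath, if_pos (hj ▸ ht), Nat.add_sub_cancel' (not_lt.mp hik), ← hτ₂] at hτi
    rw [← hσi, ← hτi]

end Cells

end Shape

end Shapes

theorem Finset.sum_card_le_card_biUnion_add_sum_card_inter {ι β : Type*} [DecidableEq ι]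
    [DecidableEq β] (s : Finset ι) (G D : ι → Finset β) (hGD : ∀ i ∈ s, G i ⊆ D i) :
    ∑ i ∈ s, #(G i) ≤ #(s.biUnion G) + ∑ i ∈ s, ∑ j ∈ s.erase i, #(G i ∩ D j) := by
  set G' := fun i => G i \ (s.erase i).biUnion D
  have hdisj : (s : Set ι).PairwiseDisjoint G' := by
    intro i hi i' hi' hne
    refine disjoint_left.mpr fun x hx hx' => (mem_sdiff.mp hx).2 ?_
    exact mem_biUnion.mpr ⟨i', mem_erase.mpr ⟨hne.symm, hi'⟩, hGD i' hi' (mem_sdiff.mp hx').1⟩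
  have hsplit : ∀ i, #(G i) ≤ #(G' i) + ∑ j ∈ s.erase i, #(G i ∩ D j) := fun i =>
    calc #(G i) = #(G' i) + #(G i ∩ (s.erase i).biUnion D) := (card_sdiff_add_card_inter _ _).symm
      _ ≤ #(G' i) + ∑ j ∈ s.erase i, #(G i ∩ D j) := by
        rw [inter_biUnion]; exact Nat.add_le_add_left card_biUnion_le _
  calc ∑ i ∈ s, #(G i) ≤ ∑ i ∈ s, (#(G' i) + ∑ j ∈ s.erase i, #(G i ∩ D j)) :=
        sum_le_sum fun i _ => hsplit i
    _ = #(s.biUnion G') + ∑ i ∈ s, ∑ j ∈ s.erase i, #(G i ∩ D j) := by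
        rw [sum_add_distrib, card_biUnion hdisj]
    _ ≤ #(s.biUnion G) + ∑ i ∈ s, ∑ j ∈ s.erase i, #(G i ∩ D j) :=
        Nat.add_le_add_right (card_le_card (biUnion_mono fun i _ => sdiff_subset)) _

section Counting

variable {α : Type*} [Fintype α] [DecidableEq α] {S : Finset α} {k : ℕ}

def orbitsMeet (k : ℕ) (b : α) : Finset ((α → α) × α) :=
  univ.filter fun p => ∃ t ∈ Icc (1 : ℕ) k, ∃ r ∈ Icc (1 : ℕ) k, p.1^[t] p.2 = p.1^[r] b

def orbitHits (S : Finset α) (k L : ℕ) : Finset ((α → α) × α) :=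
  univ.filter fun p => ∃ a ∈ S, ∃ r ∈ Icc (1 : ℕ) L, p.1^[r] a = p.1^[k] p.2

theorem mem_orbitHits {L : ℕ} {p : (α → α) × α} :
    p ∈ orbitHits S k L ↔ ∃ a ∈ S, ∃ r ∈ Icc 1 L, p.1^[r] a = p.1^[k] p.2 := by
  simp [orbitHits]

namespace Shape

variable (σ : Shape S k) {a : α}

theorem cell_subset_orbitsMeet : σ.cell a ⊆ orbitsMeet k a := by
  intro p hp
  obtain ⟨hh, hx⟩ := mem_cell.mp hp
  refine mem_filter.mpr ⟨mem_univ _, σ.j, mem_Icc.mpr ⟨σ.j_pos, σ.j_le⟩, σ.j',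
    mem_Icc.mpr ⟨σ.j'_pos, σ.j'_le⟩, ?_⟩
  simpa [hx] using iterate_j_add hh 0

theorem cell_subset_orbitHits (ha : a ∈ S) : σ.cell a ⊆ orbitHits S k (2 * k) := by
  intro p hp
  obtain ⟨hh, hx⟩ := mem_cell.mp hp
  have := σ.j_le
  have := σ.j'_le
  have := σ.j'_pos
  refine mem_filter.mpr ⟨mem_univ _, a, ha, k - σ.j + σ.j', mem_Icc.mpr ⟨by omega, by omega⟩, ?_⟩
  rw [hx, iterate_k hh]

theorem card_cell_inter_orbitsMeet_mul_le (ha : a ∈ S) {b : α} (hb : b ∈ S) (hab : b ≠ a) :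
    #(σ.cell a ∩ orbitsMeet k b) * Fintype.card α ≤
      k * (Fintype.card α ^ (Fintype.card α - σ.len) * σ.len) := by
  set keys := (σ.constraints a).map Prod.fst
  have hsub : σ.cell a ∩ orbitsMeet k b ⊆
      (cylinder (σ.constraints a)).filter (fun h => ∃ t ∈ Icc (1 : ℕ) k, h^[t] b ∈ keys.toFinset)
        ×ˢ {σ.fresh a (2 * k)} := by
    intro p hp
    obtain ⟨hcell, hmeet⟩ := mem_inter.mp hp
    obtain ⟨hh, hx⟩ := mem_cell.mp hcell
    obtain ⟨t, ht, r, hr, he⟩ := (mem_filter.mp hmeet).2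
    refine mem_product.mpr ⟨mem_filter.mpr ⟨hh, r, hr, ?_⟩, mem_singleton.mpr hx⟩
    rw [List.mem_toFinset, ← he, hx]
    exact iterate_mem_keys hh ht
  have hb' : b ∉ keys.toFinset := fun hmem =>
    (eq_or_not_mem_of_mem_keys (List.mem_toFinset.mp hmem)).elim hab (· hb)
  have hC : ∀ h ∈ cylinder (σ.constraints a), ∀ w ∉ keys.toFinset, ∀ v,
      update h w v ∈ cylinder (σ.constraints a) := fun h hh w hw v =>
    update_mem_cylinder hh (fun hmem => hw (List.mem_toFinset.mpr hmem)) v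
  calc #(σ.cell a ∩ orbitsMeet k b) * Fintype.card α
      ≤ #((cylinder (σ.constraints a)).filter
          (fun h => ∃ t ∈ Icc (1 : ℕ) k, h^[t] b ∈ keys.toFinset)) * Fintype.card α := by
        refine Nat.mul_le_mul_right _ ((card_le_card hsub).trans ?_)
        rw [card_product, card_singleton, mul_one]
    _ ≤ k * (#(cylinder (σ.constraints a)) * #keys.toFinset) :=
        card_filter_exists_iterate_mem_mul_le hC hb' k
    _ = k * (Fintype.card α ^ (Fintype.card α - σ.len) * σ.len) := by
        rw [card_cylinder (nodup_keys ha), List.toFinset_card_of_nodup (nodup_keys ha),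
          List.length_map, length_constraints]

theorem card_biUnion_cell {a : α} (ha : a ∈ S) :
    #(univ.biUnion fun σ : Shape S k => σ.cell a) =
      ∑ σ : Shape S k, Fintype.card α ^ (Fintype.card α - σ.len) := by
  rw [card_biUnion fun σ _ τ _ hne => disjoint_left.mpr fun _ hσ hτ => hne (eq_of_mem_cell hσ hτ)]
  exact sum_congr rfl fun σ _ => card_cell ha

theorem card_biUnion_cell_inter_orbitsMeet_mul_le {a b : α} (ha : a ∈ S) (hb : b ∈ S)
    (hab : b ≠ a) :
    #((univ.biUnion fun σ : Shape S k => σ.cell a) ∩ orbitsMeet k b) * Fintype.card α ≤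
      3 * k ^ 2 * ∑ σ : Shape S k, Fintype.card α ^ (Fintype.card α - σ.len) := by
  rw [inter_comm, inter_biUnion, mul_sum]
  refine (Nat.mul_le_mul_right _ card_biUnion_le).trans ?_
  rw [sum_mul]
  refine sum_le_sum fun σ _ => ?_
  rw [inter_comm]
  refine (σ.card_cell_inter_orbitsMeet_mul_le ha hb hab).trans ?_
  have := σ.len_le
  calc k * (Fintype.card α ^ (Fintype.card α - σ.len) * σ.len)
      ≤ k * (Fintype.card α ^ (Fintype.card α - σ.len) * (3 * k)) := by gcongr
    _ = 3 * k ^ 2 * Fintype.card α ^ (Fintype.card α - σ.len) := by ring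

/-- Cells of different starts can only overlap inside the sets `orbitsMeet`, which are small once
`6 k² (#S - 1) ≤ card α`. -/
theorem card_mul_sum_le_two_mul_card_orbitHits (hS : 6 * k ^ 2 * (#S - 1) ≤ Fintype.card α) :
    #S * ∑ σ : Shape S k, Fintype.card α ^ (Fintype.card α - σ.len) ≤
      2 * #(orbitHits S k (2 * k)) := by
  set W := ∑ σ : Shape S k, Fintype.card α ^ (Fintype.card α - σ.len)
  set G := fun a => univ.biUnion fun σ : Shape S k => σ.cell a
  have hoverlap : ∀ a ∈ S, 2 * ∑ b ∈ S.erase a, #(G a ∩ orbitsMeet k b) ≤ W := by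
    intro a ha
    have hn : 0 < Fintype.card α := Fintype.card_pos_iff.mpr ⟨a⟩
    refine Nat.le_of_mul_le_mul_right ?_ hn
    calc 2 * (∑ b ∈ S.erase a, #(G a ∩ orbitsMeet k b)) * Fintype.card α
        = 2 * ∑ b ∈ S.erase a, #(G a ∩ orbitsMeet k b) * Fintype.card α := by
          rw [mul_assoc, sum_mul]
      _ ≤ 2 * ∑ _b ∈ S.erase a, 3 * k ^ 2 * W := by
          refine Nat.mul_le_mul_left 2 (sum_le_sum fun b hb => ?_)
          obtain ⟨hba, hb⟩ := mem_erase.mp hb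
          exact card_biUnion_cell_inter_orbitsMeet_mul_le ha hb hba
      _ = 6 * k ^ 2 * (#S - 1) * W := by
          rw [sum_const, card_erase_of_mem ha, smul_eq_mul]; ring
      _ ≤ W * Fintype.card α := by rw [mul_comm W]; exact Nat.mul_le_mul_right _ hS
  have hunion := sum_card_le_card_biUnion_add_sum_card_inter S G (orbitsMeet k)
    fun a _ => biUnion_subset.mpr fun σ _ => σ.cell_subset_orbitsMeet
  have hcells : ∑ a ∈ S, #(G a) = #S * W := by
    rw [← smul_eq_mul, ← sum_const]
    exact sum_congr rfl fun a ha => card_biUnion_cell ha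
  have hhits : #(S.biUnion G) ≤ #(orbitHits S k (2 * k)) :=
    card_le_card (biUnion_subset.mpr fun a ha => biUnion_subset.mpr fun σ _ =>
      σ.cell_subset_orbitHits ha)
  have hbad : 2 * ∑ a ∈ S, ∑ b ∈ S.erase a, #(G a ∩ orbitsMeet k b) ≤ #S * W := by
    rw [mul_sum, ← smul_eq_mul, ← sum_const]
    exact sum_le_sum hoverlap
  omega

theorem pow_mul_pow_le_sum_shape (hS : #S + 3 * k ≤ Fintype.card α) :
    k ^ 2 * ((Fintype.card α - #S - 3 * k) ^ (3 * k) * Fintype.card α ^ (Fintype.card α - 3 * k))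
      ≤ ∑ σ : Shape S k, Fintype.card α ^ (Fintype.card α - σ.len) := by
  set n := Fintype.card α
  set d := n - #S - 3 * k
  have hfresh : Fintype.card {z // z ∉ S} = n - #S := by
    rw [Fintype.card_subtype_compl, Fintype.card_coe]
  have hterm : ∀ m ≤ 3 * k,
      d ^ (3 * k) * n ^ (n - 3 * k) ≤ (n - #S).descFactorial m * n ^ (n - m) := fun m hm =>
    calc d ^ (3 * k) * n ^ (n - 3 * k) = d ^ m * (d ^ (3 * k - m) * n ^ (n - 3 * k)) := by
          rw [← mul_assoc, ← pow_add, Nat.add_sub_cancel' hm]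
      _ ≤ (n - #S + 1 - m) ^ m * (n ^ (3 * k - m) * n ^ (n - 3 * k)) := by
          gcongr <;> omega
      _ ≤ (n - #S).descFactorial m * n ^ (n - m) := by
          rw [← pow_add, show 3 * k - m + (n - 3 * k) = n - m by omega]
          exact Nat.mul_le_mul_right _ (Nat.pow_sub_le_descFactorial _ _)
  rw [Fintype.sum_sigma]
  calc k ^ 2 * (d ^ (3 * k) * n ^ (n - 3 * k))
        = ∑ _jj : Fin k × Fin k, d ^ (3 * k) * n ^ (n - 3 * k) := by
        rw [sum_const, card_univ, Fintype.card_prod, Fintype.card_fin, smul_eq_mul, sq]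
    _ ≤ _ := sum_le_sum fun jj _ => by
        change _ ≤ ∑ _e : Fin (2 * k + (jj.1 + 1)) ↪ {z // z ∉ S}, n ^ (n - (2 * k + (jj.1 + 1)))
        rw [sum_const, card_univ, Fintype.card_embedding_eq, hfresh, Fintype.card_fin, smul_eq_mul]
        exact hterm _ (by have := jj.1.isLt; omega)

end Shape

end Counting

theorem exp_neg_two_mul_le_one_sub {u : ℝ} (h0 : 0 ≤ u) (h1 : u ≤ 1 / 2) :
    Real.exp (-(2 * u)) ≤ 1 - u := by
  have hpos : 0 < 1 + 2 * u := by linarith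
  calc Real.exp (-(2 * u)) = (Real.exp (2 * u))⁻¹ := Real.exp_neg _
    _ ≤ (1 + 2 * u)⁻¹ := inv_anti₀ hpos (by linarith [Real.add_one_le_exp (2 * u)])
    _ ≤ 1 - u := by rw [inv_le_iff_one_le_mul₀ hpos]; nlinarith

theorem exp_mul_pow_le_sub_pow {n d : ℕ} (hn : 0 < n) (hd : 2 * d ≤ n) (m : ℕ) :
    Real.exp (-(2 * m * d / n)) * (n : ℝ) ^ m ≤ ((n - d : ℕ) : ℝ) ^ m := by
  have hnR : (0 : ℝ) < n := by exact_mod_cast hn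
  have hu0 : (0 : ℝ) ≤ d / n := by positivity
  have hu1 : (d : ℝ) / n ≤ 1 / 2 := by
    rw [div_le_div_iff₀ hnR two_pos]; exact_mod_cast (by omega : d * 2 ≤ 1 * n)
  calc Real.exp (-(2 * m * d / n)) * (n : ℝ) ^ m
        = (Real.exp (-(2 * (d / n)))) ^ m * (n : ℝ) ^ m := by
        rw [← Real.exp_nat_mul]; ring_nf
    _ ≤ (1 - d / n) ^ m * (n : ℝ) ^ m := by
        gcongr; exact exp_neg_two_mul_le_one_sub hu0 hu1
    _ = ((n - d : ℕ) : ℝ) ^ m := by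
        rw [← mul_pow, Nat.cast_sub (by omega)]; field_simp

theorem exp_mul_le_card_orbitHits {α : Type*} [Fintype α] [DecidableEq α] {S : Finset α} {k : ℕ}
    (hcover : 2 * (#S + 3 * k) ≤ Fintype.card α)
    (hspread : 6 * k * (#S + 3 * k) ≤ 20 * Fintype.card α)
    (hoverlap : 6 * k ^ 2 * (#S - 1) ≤ Fintype.card α) :
    Real.exp (-20) * (#S * k ^ 2 * (Fintype.card α : ℝ) ^ Fintype.card α) ≤
      2 * #(orbitHits S k (2 * k)) := by
  set n := Fintype.card α
  rcases Nat.eq_zero_or_pos n with hn | hn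
  · have : #S = 0 := Nat.le_zero.mp (hn ▸ card_le_univ S)
    simp [this]
  have hcount := (Nat.mul_le_mul_left #S (Shape.pow_mul_pow_le_sum_shape (by omega))).trans
    (Shape.card_mul_sum_le_two_mul_card_orbitHits hoverlap)
  rw [Nat.sub_sub] at hcount
  have hexp : Real.exp (-20) * (n : ℝ) ^ n ≤
      ((n - (#S + 3 * k) : ℕ) : ℝ) ^ (3 * k) * (n : ℝ) ^ (n - 3 * k) := by
    have hpow : (n : ℝ) ^ n = (n : ℝ) ^ (3 * k) * (n : ℝ) ^ (n - 3 * k) := by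
      rw [← pow_add, Nat.add_sub_cancel' (by omega)]
    rw [hpow, ← mul_assoc]
    refine mul_le_mul_of_nonneg_right (le_trans ?_ (exp_mul_pow_le_sub_pow hn hcover (3 * k)))
      (by positivity)
    gcongr
    rw [div_le_iff₀ (by exact_mod_cast hn)]
    exact_mod_cast (by linarith : 2 * (3 * k) * (#S + 3 * k) ≤ 20 * n)
  calc Real.exp (-20) * (#S * k ^ 2 * (n : ℝ) ^ n)
        = #S * k ^ 2 * (Real.exp (-20) * (n : ℝ) ^ n) := by ring
    _ ≤ #S * k ^ 2 * (((n - (#S + 3 * k) : ℕ) : ℝ) ^ (3 * k) * (n : ℝ) ^ (n - 3 * k)) := by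
        gcongr
    _ ≤ 2 * #(orbitHits S k (2 * k)) := by
        rw [← mul_assoc] at hcount
        exact_mod_cast hcount

theorem exists_numStarts {N k T : ℕ} (hk : 0 < k) (h2kT : 2 * k ≤ T) (hTk : T * k ≤ N)
    (hN : 64 * k ≤ N) :
    ∃ M, M ≤ N ∧ M * (2 * k) ≤ T ∧ T ≤ 10 * k * M ∧ 2 * (M + 3 * k) ≤ N ∧
      6 * k * (M + 3 * k) ≤ 20 * N ∧ 6 * k ^ 2 * (M - 1) ≤ N := by
  set M := (T + 6 * k) / (8 * k)
  have hlo : M * (8 * k) ≤ T + 6 * k := Nat.div_mul_le_self _ _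
  have hhi : T + 6 * k < (M + 1) * (8 * k) := by
    rw [add_mul, one_mul]; exact Nat.lt_div_mul_add (by omega)
  have hM : 1 ≤ M := Nat.div_pos (by omega) (by omega)
  have hkM : k ≤ k * M := Nat.le_mul_of_pos_right k hM
  have hT : T ≤ T * k := Nat.le_mul_of_pos_right T hk
  have hkk : 2 * k * k ≤ T * k := Nat.mul_le_mul_right k h2kT
  obtain ⟨M', hM'⟩ : ∃ M', M = M' + 1 := ⟨M - 1, by omega⟩
  have hM'k : k * (M' * (8 * k)) ≤ k * T := by
    apply Nat.mul_le_mul_left; rw [hM'] at hlo; nlinarith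
  refine ⟨M, by nlinarith, by nlinarith, by nlinarith, by nlinarith, by nlinarith, ?_⟩
  rw [hM', Nat.add_sub_cancel]
  nlinarith

theorem card_filter_apply_eq_self {α : Type*} [Fintype α] [DecidableEq α] :
    #(univ.filter fun p : (α → α) × α => p.1 p.2 = p.2) =
      Fintype.card α * Fintype.card α ^ (Fintype.card α - 1) := by
  have hfix : ∀ x : α, #(univ.filter fun h : α → α => h x = x) =
      Fintype.card α ^ (Fintype.card α - 1) := fun x => by
    convert card_cylinder (L := [(x, x)]) (by simp) using 2
    · ext h
      simp [mem_cylinder]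
    · rfl
  simp only [card_filter, Fintype.sum_prod_type]
  rw [sum_comm]
  simp only [← card_filter, hfix, sum_const, card_univ, smul_eq_mul]

namespace OracleAlg

variable {N : ℕ}

def walk (y : Fin N) : ℕ → Fin N → OracleAlg N → OracleAlg N
  | 0, _, next => next
  | L + 1, z, next => query z fun v => if v = y then output z else walk y L v next

def walks (y : Fin N) (L : ℕ) (starts : List (Fin N)) : OracleAlg N :=
  starts.foldr (walk y L) (output y)

theorem numQueries_walk (y : Fin N) :
    ∀ (L : ℕ) (z : Fin N) (next : OracleAlg N),
      (walk y L z next).numQueries ≤ L + next.numQueries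
  | 0, _, _ => by simp [walk]
  | L + 1, z, next => by
    have hsup : (univ.sup fun v => (if v = y then output z else walk y L v next).numQueries) ≤
        L + next.numQueries := by
      refine Finset.sup_le fun v _ => ?_
      split_ifs
      · simp [numQueries]
      · exact numQueries_walk y L v next
    simp only [walk, numQueries]
    omega

theorem numQueries_walks (y : Fin N) (L : ℕ) (starts : List (Fin N)) :
    (walks y L starts).numQueries ≤ starts.length * L := by
  induction starts with
  | nil => simp [walks, numQueries]
  | cons z starts ih =>
    rw [walks, List.foldr_cons, List.length_cons]
    have := numQueries_walk y L z (walks y L starts)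
    rw [walks] at ih this
    nlinarith

theorem run_walk (y : Fin N) (h : Fin N → Fin N) :
    ∀ (L : ℕ) (z : Fin N) (next : OracleAlg N),
      ((∃ r ∈ Icc 1 L, h^[r] z = y) ∨ h (next.run h) = y) → h ((walk y L z next).run h) = y
  | 0, _, _, hyp => hyp.resolve_left (by simp)
  | L + 1, z, next, hyp => by
    simp only [walk, run]
    split_ifs with hz
    · exact hz
    · refine run_walk y h L (h z) next (hyp.imp (fun ⟨r, hr, hrz⟩ => ⟨r - 1, ?_, ?_⟩) id)
      · have : r ≠ 1 := by rintro rfl; exact hz hrz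
        have := mem_Icc.mp hr
        exact mem_Icc.mpr ⟨by omega, by omega⟩
      · rwa [← iterate_succ_apply, Nat.succ_eq_add_one, Nat.sub_add_cancel (mem_Icc.mp hr).1]

theorem run_walks (y : Fin N) (L : ℕ) (h : Fin N → Fin N) {starts : List (Fin N)}
    (hy : ∃ z ∈ starts, ∃ r ∈ Icc 1 L, h^[r] z = y) : h ((walks y L starts).run h) = y := by
  induction starts with
  | nil => simp at hy
  | cons z starts ih =>
    rw [walks, List.foldr_cons]
    obtain ⟨z', hz', hr⟩ := hy
    rcases List.mem_cons.mp hz' with rfl | hz'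
    · exact run_walk y h L z' _ (Or.inl hr)
    · exact run_walk y h L z _ (Or.inr (ih ⟨z', hz', hr⟩))

def successSet (A : Fin N → OracleAlg N) (k : ℕ) : Finset ((Fin N → Fin N) × Fin N) :=
  univ.filter fun p => p.1 ((A (p.1^[k] p.2)).run p.1) = p.1^[k] p.2

theorem orbitHits_subset_successSet_walks (S : Finset (Fin N)) (k L : ℕ) :
    orbitHits S k L ⊆ successSet (fun y => walks y L S.toList) k := fun p hp =>
  have ⟨a, ha, r, hr, he⟩ := mem_orbitHits.mp hp
  mem_filter.mpr ⟨mem_univ _, run_walks _ L p.1 ⟨a, mem_toList.mpr ha, r, hr, he⟩⟩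

theorem filter_apply_eq_self_subset_successSet_output (k : ℕ) :
    (univ.filter fun p : (Fin N → Fin N) × Fin N => p.1 p.2 = p.2) ⊆ successSet output k :=
  fun p hp => by
    have hfix := (mem_filter.mp hp).2
    exact mem_filter.mpr ⟨mem_univ _, by simp only [run, iterate_fixed hfix, hfix]⟩

theorem pow_le_card_successSet_output (hN : 0 < N) (k : ℕ) :
    N ^ N ≤ #(successSet (output (N := N)) k) := by
  have hfix := card_le_card (filter_apply_eq_self_subset_successSet_output (N := N) k)
  rwa [card_filter_apply_eq_self, Fintype.card_fin, ← pow_succ', Nat.sub_add_cancel hN] at hfix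

theorem exists_card_successSet_ge {k T : ℕ} (hk : 0 < k) (h2kT : 2 * k ≤ T) (hTk : T * k ≤ N)
    (hN : 64 * k ≤ N) :
    ∃ A : Fin N → OracleAlg N, (∀ y, (A y).numQueries ≤ T) ∧
      Real.exp (-20) / 20 * (T * k) * (N : ℝ) ^ N ≤ #(successSet A k) := by
  obtain ⟨M, hMN, hqueries, hTM, hcover, hspread, hoverlap⟩ := exists_numStarts hk h2kT hTk hN
  obtain ⟨S, -, hS⟩ := exists_subset_card_eq (s := (univ : Finset (Fin N))) (by simpa using hMN)
  subst hS
  refine ⟨fun y => walks y (2 * k) S.toList, fun y => ?_, ?_⟩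
  · exact (numQueries_walks _ _ _).trans (by rwa [length_toList])
  · have hcount := exp_mul_le_card_orbitHits (S := S) (by rwa [Fintype.card_fin])
      (by rwa [Fintype.card_fin]) (by rwa [Fintype.card_fin])
    have hsub := card_le_card (orbitHits_subset_successSet_walks S k (2 * k))
    rw [Fintype.card_fin] at hcount
    have hTM' : (T : ℝ) * k ≤ 10 * k ^ 2 * #S := by
      exact_mod_cast (by nlinarith : T * k ≤ 10 * k ^ 2 * #S)
    calc Real.exp (-20) / 20 * (T * k) * (N : ℝ) ^ N
        ≤ Real.exp (-20) / 20 * (10 * k ^ 2 * #S) * (N : ℝ) ^ N := by gcongr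
      _ = Real.exp (-20) * (#S * k ^ 2 * (N : ℝ) ^ N) / 2 := by ring
      _ ≤ #(successSet (fun y => walks y (2 * k) S.toList) k) := by
        rw [div_le_iff₀ two_pos]
        exact hcount.trans (by rw [mul_comm]; exact_mod_cast Nat.mul_le_mul_right 2 hsub)

end OracleAlg

/-- There is an absolute constant `c > 0` such that for all
positive integers `N, k, T` with `k ≤ √N` and `2k ≤ T ≤ N/k`, there exists an
algorithm `A` making at most `T` oracle queries to a random function
`h : [N] → [N]` such that the probability (over uniform `h` and uniform
`x ∈ [N]`) that `A`, on input `h^(k)(x)`, outputs a point `z` with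
`h(z) = h^(k)(x)` is at least `c·Tk/N`. -/
theorem stmt0 :
    ∃ c : ℝ, 0 < c ∧
      ∀ (N k T : ℕ), 0 < N → 0 < k →
        (k : ℝ) ≤ Real.sqrt N → 2 * k ≤ T → (T : ℝ) ≤ (N : ℝ) / (k : ℝ) →
        ∃ A : Fin N → OracleAlg N,
          (∀ y : Fin N, (A y).numQueries ≤ T) ∧
          c * ((T : ℝ) * k) / N ≤
            ((Finset.univ.filter (fun p : (Fin N → Fin N) × Fin N =>
                p.1 ((A (p.1^[k] p.2)).run p.1) = p.1^[k] p.2)).card : ℝ) /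
              (Fintype.card ((Fin N → Fin N) × Fin N)) := by
  refine ⟨Real.exp (-20) / 4096, by positivity, fun N k T hN hk hkN h2kT hTN => ?_⟩
  have hkR : (0 : ℝ) < k := by exact_mod_cast hk
  have hk2 : k ^ 2 ≤ N := by exact_mod_cast (Real.le_sqrt' hkR).mp hkN
  have hTk : T * k ≤ N := by exact_mod_cast (le_div_iff₀ hkR).mp hTN
  obtain ⟨A, hqueries, hcount⟩ : ∃ A : Fin N → OracleAlg N, (∀ y, (A y).numQueries ≤ T) ∧
      Real.exp (-20) / 4096 * (T * k) * (N : ℝ) ^ N ≤ #(OracleAlg.successSet A k) := by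
    by_cases hbig : 64 * k ≤ N
    · obtain ⟨A, hA, hcount⟩ := OracleAlg.exists_card_successSet_ge hk h2kT hTk hbig
      exact ⟨A, hA, le_trans (by gcongr; norm_num) hcount⟩
    · -- `N < 64 k` and `k ^ 2 ≤ N` force `T k ≤ N < 4096`
      have hsmall : (T : ℝ) * k ≤ 4096 := by exact_mod_cast (by nlinarith : T * k ≤ 4096)
      have hc : Real.exp (-20) / 4096 * (T * k) ≤ 1 := by
        have := Real.exp_le_one_iff.mpr (show (-20 : ℝ) ≤ 0 by norm_num)
        nlinarith [Real.exp_pos (-20)]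
      refine ⟨OracleAlg.output, fun _ => Nat.zero_le T, ?_⟩
      exact (mul_le_of_le_one_left (by positivity) hc).trans
        (by exact_mod_cast OracleAlg.pow_le_card_successSet_output hN k)
  refine ⟨A, hqueries, ?_⟩
  rw [Fintype.card_prod, Fintype.card_fun, Fintype.card_fin, Nat.cast_mul, Nat.cast_pow,
    div_le_div_iff₀ (by positivity) (by positivity)]
  calc Real.exp (-20) / 4096 * (T * k) * ((N : ℝ) ^ N * N)
      = Real.exp (-20) / 4096 * (T * k) * (N : ℝ) ^ N * N := by ring
    _ ≤ #(OracleAlg.successSet A k) * N := by gcongr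
end

section
/- Let h₁,...,h_k : [N] → [N] be independent uniformly random functions. Any algorithm A that is given oracle access to each h_i and makes at most T oracle queries in total satisfies: the probability over the functions and over a uniform x₀ ∈ [N] that A, on input h_k(h_{k-1}(⋯h₁(x₀)⋯)), outputs a point z with h_k(z) = h_k(h_{k-1}(⋯h₁(x₀)⋯)) is at most (2T+3)/N. -/
/-!
Lazy sampling. Run the algorithm while recording the answers it receives in a table, and
condition on the end `y` of the chain `x₀, h₁ x₀, …` and on the event that no query so far has hit
a point of this chain. Rerouting the chain through another unqueried point is a bijection, so the
chain point at level `a` is uniform among the unqueried inputs of `h_a`: a fresh query `(a, x)` hits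
it with probability at most `1/(N - D)`, where `D` bounds the number of recorded inputs of each
oracle, and otherwise its answer is uniform, hence `y` with probability `1/N`; the final output
`z` is charged like one more query `(ℓ, z)` to the last oracle. By induction on the
decision tree, with `q` queries left the success probability is at most `(q+1)/N + (q+1)/(N-D)`;
the hitting terms telescope since `1/(N-D) + (1 - 1/(N-D)) q/(N-D-1) = (q+1)/(N-D)`.
For `D = 0` and `q = T` this is `(2T+2)/N`.
-/

/-- An oracle algorithm (decision tree) with oracle access to `k` functions
`[N] → [N]`: each query specifies an oracle index `i ∈ [k]` and an input
`x ∈ [N]`, and the computation continues depending on the reply `h_i(x)`. -/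
inductive KAlg (k N : ℕ) : Type
  | output : Fin N → KAlg k N
  | query : Fin k → Fin N → (Fin N → KAlg k N) → KAlg k N

namespace KAlg

/-- Run the algorithm with oracles `h i`. -/
def run {k N : ℕ} : KAlg k N → (Fin k → Fin N → Fin N) → Fin N
  | output z, _ => z
  | query i x cont, h => run (cont (h i x)) h

/-- The maximal total number of oracle queries made on any execution path. -/
def numQueries {k N : ℕ} : KAlg k N → ℕ
  | output _ => 0
  | query _ _ cont => 1 + Finset.univ.sup fun y => numQueries (cont y)

end KAlg

/-- The hash chain `h_{[1,k]} = h_k ∘ ⋯ ∘ h_1` (with `h i` for `i : Fin k`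
playing the role of `h_{i+1}`). -/
def chain {k N : ℕ} (h : Fin k → Fin N → Fin N) (x : Fin N) : Fin N :=
  (List.finRange k).foldl (fun y i => h i y) x

lemma KAlg.numQueries_cont_lt {k N : ℕ} {a : Fin k} {x : Fin N} (cont : Fin N → KAlg k N)
    (r : Fin N) : (cont r).numQueries < (KAlg.query a x cont).numQueries := by
  have := Finset.le_sup (f := fun r => (cont r).numQueries) (Finset.mem_univ r)
  simp only [KAlg.numQueries]
  omega

open Finset

namespace ChainPreimage

variable {k N : ℕ}

abbrev Sample (k N : ℕ) := (Fin k → Fin N → Fin N) × Fin N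

def partialChain (h : Fin k → Fin N → Fin N) (x₀ : Fin N) (n : ℕ) : Fin N :=
  ((List.finRange k).take n).foldl (fun y i => h i y) x₀

section partialChain

variable (h : Fin k → Fin N → Fin N) (x₀ : Fin N)

@[simp]
lemma partialChain_zero : partialChain h x₀ 0 = x₀ := rfl

lemma partialChain_succ {n : ℕ} (hn : n < k) :
    partialChain h x₀ (n + 1) = h ⟨n, hn⟩ (partialChain h x₀ n) := by
  have : (List.finRange k)[n]? = some ⟨n, hn⟩ := by simp [hn]
  simp [partialChain, List.take_add_one, this]

lemma partialChain_succ_of_le {n : ℕ} (hn : k ≤ n) :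
    partialChain h x₀ (n + 1) = partialChain h x₀ n := by
  simp only [partialChain]
  rw [List.take_of_length_le (by simp; omega), List.take_of_length_le (by simpa using hn)]

lemma chain_eq_partialChain : chain h x₀ = partialChain h x₀ k := by
  simp [chain, partialChain, List.take_of_length_le]

lemma partialChain_congr {h' : Fin k → Fin N → Fin N} (n : ℕ)
    (H : ∀ i : Fin k, (i : ℕ) < n → h' i (partialChain h x₀ i) = h i (partialChain h x₀ i)) :
    partialChain h' x₀ n = partialChain h x₀ n := by
  induction n with
  | zero => rfl
  | succ m ih =>
    have ih' := ih fun i hi => H i (by omega)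
    by_cases hm : m < k
    · rw [partialChain_succ _ _ hm, partialChain_succ _ _ hm, ih', H ⟨m, hm⟩ (by simp)]
    · rw [partialChain_succ_of_le _ _ (by omega), partialChain_succ_of_le _ _ (by omega), ih']

end partialChain

abbrev Table (k N : ℕ) := Fin k → Fin N → Option (Fin N)

namespace Table

def assign (φ : Table k N) (a : Fin k) (x r : Fin N) : Table k N :=
  fun i p => if i = a ∧ p = x then some r else φ i p

def domCard (φ : Table k N) (i : Fin k) : ℕ := #{p | φ i p ≠ none}

lemma domCard_assign_le (φ : Table k N) (a : Fin k) (x r : Fin N) (i : Fin k) :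
    (φ.assign a x r).domCard i ≤ φ.domCard i + 1 := by
  refine (card_le_card fun p hp => ?_).trans (card_insert_le x _)
  rw [mem_filter] at hp
  rw [mem_insert, mem_filter]
  by_cases hpx : i = a ∧ p = x
  · exact Or.inl hpx.2
  · simp_all [assign]

lemma card_free_add_domCard (φ : Table k N) (a : Fin k) :
    #{p | φ a p = none} + φ.domCard a = N := by
  rw [domCard, card_filter_add_card_filter_not, card_univ, Fintype.card_fin]

def NeverAnswers (φ : Table k N) (ℓ : Fin k) (y : Fin N) : Prop := ∀ p r, φ ℓ p = some r → r ≠ y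

lemma NeverAnswers.assign {φ : Table k N} {ℓ : Fin k} {y : Fin N} (hφ : φ.NeverAnswers ℓ y)
    {a : Fin k} {x r : Fin N} (hr : ¬(a = ℓ ∧ r = y)) : (φ.assign a x r).NeverAnswers ℓ y := by
  intro p s hs
  simp only [Table.assign] at hs
  split_ifs at hs with hap
  · obtain ⟨rfl, -⟩ := hap
    exact fun hsy => hr ⟨rfl, (Option.some_injective _ hs).trans hsy⟩
  · exact hφ p s hs

end Table

/-- The state of lazy sampling after the table `φ` of answers has been committed: the samples
that agree with `φ`, whose chain ends at `y`, and whose chain points were never queried. -/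
def hiddenChains (φ : Table k N) (y : Fin N) : Finset (Sample k N) :=
  {ω | (∀ i p r, φ i p = some r → ω.1 i p = r) ∧
    (∀ i : Fin k, φ i (partialChain ω.1 ω.2 i) = none) ∧ partialChain ω.1 ω.2 k = y}

lemma mem_hiddenChains {φ : Table k N} {y : Fin N} {ω : Sample k N} :
    ω ∈ hiddenChains φ y ↔ (∀ i p r, φ i p = some r → ω.1 i p = r) ∧
      (∀ i : Fin k, φ i (partialChain ω.1 ω.2 i) = none) ∧ partialChain ω.1 ω.2 k = y := by
  simp [hiddenChains]

lemma hiddenChains_assign {φ : Table k N} {a : Fin k} {x : Fin N} (hx : φ a x = none)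
    (y r : Fin N) : hiddenChains (φ.assign a x r) y
      = {ω ∈ hiddenChains φ y | partialChain ω.1 ω.2 a ≠ x ∧ ω.1 a x = r} := by
  ext ω
  simp only [mem_filter, mem_hiddenChains, Table.assign]
  constructor
  · rintro ⟨hagree, hfree, hy⟩
    refine ⟨⟨fun i p s hs => hagree i p s ?_, fun i => ?_, hy⟩, fun hax => ?_, ?_⟩
    · rwa [if_neg (by rintro ⟨rfl, rfl⟩; simp_all)]
    · have := hfree i
      split_ifs at this
      exact this
    · simpa [hax] using hfree a
    · simpa using hagree a x r
  · rintro ⟨⟨hagree, hfree, hy⟩, hax, hr⟩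
    refine ⟨fun i p s hs => ?_, fun i => ?_, hy⟩
    · split_ifs at hs with hip
      · obtain ⟨rfl, rfl⟩ := hip
        simp_all
      · exact hagree i p s hs
    · rw [if_neg (by rintro ⟨rfl, h⟩; exact hax h)]
      exact hfree i

def Sample.redefine (a : Fin k) (x r : Fin N) (ω : Sample k N) : Sample k N :=
  (Function.update ω.1 a (Function.update (ω.1 a) x r), ω.2)

lemma partialChain_redefine {a : Fin k} {x r : Fin N} {ω : Sample k N}
    (hax : partialChain ω.1 ω.2 a ≠ x) (n : ℕ) :
    partialChain (ω.redefine a x r).1 (ω.redefine a x r).2 n = partialChain ω.1 ω.2 n := by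
  refine partialChain_congr _ _ n fun i _ => ?_
  by_cases hia : i = a
  · subst hia
    simp [Sample.redefine, hax]
  · simp [Sample.redefine, hia]

lemma redefine_mem_hiddenChains_assign {φ : Table k N} {a : Fin k} {x : Fin N}
    (hx : φ a x = none) {y r : Fin N} (r' : Fin N) {ω : Sample k N}
    (hω : ω ∈ hiddenChains (φ.assign a x r) y) :
    ω.redefine a x r' ∈ hiddenChains (φ.assign a x r') y := by
  rw [hiddenChains_assign hx, mem_filter, mem_hiddenChains] at hω ⊢
  obtain ⟨⟨hagree, hfree, hy⟩, hax, -⟩ := hω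
  have hchain := partialChain_redefine (r := r') hax
  refine ⟨⟨fun i p s hs => ?_, fun i => ?_, ?_⟩, ?_, ?_⟩
  · by_cases hia : i = a
    · subst hia
      have hpx : p ≠ x := by rintro rfl; simp [hx] at hs
      simpa [Sample.redefine, hpx] using hagree i p s hs
    · simpa [Sample.redefine, hia] using hagree i p s hs
  · rw [hchain]; exact hfree i
  · rw [hchain]; exact hy
  · rw [hchain]; exact hax
  · simp [Sample.redefine]

lemma redefine_redefine {a : Fin k} {x r r' : Fin N} {ω : Sample k N} (hr : ω.1 a x = r) :
    (ω.redefine a x r').redefine a x r = ω := by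
  ext i p : 3
  · by_cases hia : i = a
    · subst hia
      by_cases hp : p = x
      · simp [Sample.redefine, hp, hr]
      · simp [Sample.redefine, hp]
    · simp [Sample.redefine, hia]
  · rfl

/-- A fresh answer is uniform: the sizes of the refined states do not depend on it. -/
lemma card_hiddenChains_assign {φ : Table k N} {a : Fin k} {x : Fin N} (hx : φ a x = none)
    (y r r' : Fin N) :
    #(hiddenChains (φ.assign a x r) y) = #(hiddenChains (φ.assign a x r') y) := by
  have hval : ∀ {r ω}, ω ∈ hiddenChains (φ.assign a x r) y → ω.1 a x = r := fun hω => by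
    rw [hiddenChains_assign hx, mem_filter] at hω
    exact hω.2.2
  exact card_bij' (fun ω _ => ω.redefine a x r') (fun ω _ => ω.redefine a x r)
    (fun _ hω => redefine_mem_hiddenChains_assign hx r' hω)
    (fun _ hω => redefine_mem_hiddenChains_assign hx r hω)
    (fun _ hω => redefine_redefine (hval hω)) (fun _ hω => redefine_redefine (hval hω))

lemma card_filter_chainPoint_ne {φ : Table k N} {a : Fin k} {x : Fin N} (hx : φ a x = none)
    (y : Fin N) (E : Sample k N → Prop) [DecidablePred E] :
    #{ω ∈ hiddenChains φ y | partialChain ω.1 ω.2 a ≠ x ∧ E ω}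
      = ∑ r, #{ω ∈ hiddenChains (φ.assign a x r) y | E ω} := by
  rw [card_eq_sum_card_fiberwise (f := fun ω => ω.1 a x) (t := univ) fun _ _ => mem_univ _]
  refine sum_congr rfl fun r _ => congrArg card ?_
  ext ω
  simp only [hiddenChains_assign hx, mem_filter]
  tauto

/-- Reroute the chain of `ω` through `v` at level `a`: redirect `h_{a-1}` at the previous chain
point to `v` (or start at `v` if `a = 0`) and precompose `h_a` with the swap of `v` and the old
chain point, so that the rest of the chain is unchanged. -/
def reroute (a : Fin k) (v : Fin N) (ω : Sample k N) : Sample k N :=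
  (fun i => if (i : ℕ) + 1 = a then Function.update (ω.1 i) (partialChain ω.1 ω.2 i) v
    else if (i : ℕ) = a then ω.1 i ∘ Equiv.swap (partialChain ω.1 ω.2 a) v
    else ω.1 i,
   if (a : ℕ) = 0 then v else ω.2)

lemma reroute_fst (a : Fin k) (v : Fin N) (ω : Sample k N) (i : Fin k) :
    (reroute a v ω).1 i = if (i : ℕ) + 1 = a then Function.update (ω.1 i) (partialChain ω.1 ω.2 i) v
      else if (i : ℕ) = a then ω.1 i ∘ Equiv.swap (partialChain ω.1 ω.2 a) v
      else ω.1 i := rfl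

lemma partialChain_reroute (a : Fin k) (v : Fin N) (ω : Sample k N) (n : ℕ) :
    partialChain (reroute a v ω).1 (reroute a v ω).2 n
      = if n = a then v else partialChain ω.1 ω.2 n := by
  induction n with
  | zero => simp [reroute, eq_comm]
  | succ m ih =>
    by_cases hm : m < k
    · rw [partialChain_succ _ _ hm, partialChain_succ _ _ hm, ih]
      by_cases hma : m + 1 = a
      · simp [reroute, hma, show m ≠ a by omega]
      · by_cases hma' : m = a
        · simp [reroute, hma']
        · simp [reroute, hma, hma']
    · rw [partialChain_succ_of_le _ _ (by omega), partialChain_succ_of_le _ _ (by omega), ih]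
      simp [show m ≠ a by omega, show m + 1 ≠ a by omega]

lemma reroute_mem_hiddenChains {φ : Table k N} {y : Fin N} {a : Fin k} {x v : Fin N}
    (hx : φ a x = none) (hv : φ a v = none) {ω : Sample k N} (hω : ω ∈ hiddenChains φ y)
    (hax : partialChain ω.1 ω.2 a = x) : reroute a v ω ∈ hiddenChains φ y := by
  rw [mem_hiddenChains] at hω ⊢
  obtain ⟨hagree, hfree, hy⟩ := hω
  refine ⟨fun i p s hs => ?_, fun i => ?_, ?_⟩
  · have hpc : p ≠ partialChain ω.1 ω.2 i := by rintro rfl; simp [hfree i] at hs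
    by_cases hia : (i : ℕ) = a
    · obtain rfl : i = a := Fin.ext hia
      have hpx : p ≠ x := by rintro rfl; simp [hx] at hs
      have hpv : p ≠ v := by rintro rfl; simp [hv] at hs
      simpa [reroute, hax, Equiv.swap_apply_of_ne_of_ne hpx hpv] using hagree i p s hs
    · by_cases hi : (i : ℕ) + 1 = a <;> simpa [reroute, hia, hi, hpc] using hagree i p s hs
  · rw [partialChain_reroute]
    by_cases hia : (i : ℕ) = a
    · obtain rfl : i = a := Fin.ext hia
      simpa using hv
    · simpa [hia] using hfree i
  · rw [partialChain_reroute, if_neg a.isLt.ne']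
    exact hy

lemma reroute_reroute {a : Fin k} {x v : Fin N} {ω : Sample k N}
    (hax : partialChain ω.1 ω.2 a = x) : reroute a x (reroute a v ω) = ω := by
  have hprev : ∀ i : Fin k, (i : ℕ) + 1 = a → ω.1 i (partialChain ω.1 ω.2 i) = x := by
    intro i hi
    have := partialChain_succ ω.1 ω.2 i.isLt
    rw [hi, hax] at this
    exact this.symm
  ext i p : 3
  · simp only [reroute_fst, partialChain_reroute]
    by_cases hi : (i : ℕ) + 1 = a
    · by_cases hp : p = partialChain ω.1 ω.2 i
      · simp [hi, hp, hprev i hi, show (i : ℕ) ≠ a by omega]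
      · simp [hi, hp, show (i : ℕ) ≠ a by omega]
    · by_cases hia : (i : ℕ) = a
      · simp [hia, hax, Equiv.swap_comm v x]
      · simp [hi, hia]
  · by_cases ha : (a : ℕ) = 0
    · simp [reroute, ha, ← hax]
    · simp [reroute, ha]

/-- The chain point at level `a` is uniform among the points that `φ` leaves free at level `a`. -/
lemma card_chainPoint_eq {φ : Table k N} (y : Fin N) {a : Fin k} {x v : Fin N}
    (hx : φ a x = none) (hv : φ a v = none) :
    #{ω ∈ hiddenChains φ y | partialChain ω.1 ω.2 a = x}
      = #{ω ∈ hiddenChains φ y | partialChain ω.1 ω.2 a = v} := by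
  refine card_bij' (fun ω _ => reroute a v ω) (fun ω _ => reroute a x ω) ?_ ?_ ?_ ?_
  · intro ω hω
    rw [mem_filter] at hω ⊢
    exact ⟨reroute_mem_hiddenChains hx hv hω.1 hω.2, by simp [partialChain_reroute]⟩
  · intro ω hω
    rw [mem_filter] at hω ⊢
    exact ⟨reroute_mem_hiddenChains hv hx hω.1 hω.2, by simp [partialChain_reroute]⟩
  · exact fun ω hω => reroute_reroute (mem_filter.mp hω).2
  · exact fun ω hω => reroute_reroute (mem_filter.mp hω).2

lemma card_hiddenChains_eq_mul {φ : Table k N} (y : Fin N) {a : Fin k} {x : Fin N}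
    (hx : φ a x = none) : #(hiddenChains φ y)
      = (N - φ.domCard a) * #{ω ∈ hiddenChains φ y | partialChain ω.1 ω.2 a = x} := by
  rw [card_eq_sum_card_fiberwise (f := fun ω => partialChain ω.1 ω.2 a) (t := {p | φ a p = none})
    fun ω hω => by simpa using (mem_hiddenChains.mp hω).2.1 a]
  rw [sum_congr rfl fun v hv => card_chainPoint_eq y (by simpa using hv) hx, sum_const, smul_eq_mul]
  have := φ.card_free_add_domCard a
  congr 1
  omega

lemma card_chainPoint_mul_le {φ : Table k N} (y : Fin N) {a : Fin k} {x : Fin N}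
    (hx : φ a x = none) {D : ℕ} (hD : φ.domCard a ≤ D) :
    #{ω ∈ hiddenChains φ y | partialChain ω.1 ω.2 a = x} * (N - D) ≤ #(hiddenChains φ y) := by
  rw [card_hiddenChains_eq_mul y hx, mul_comm]
  gcongr

lemma card_hiddenChains_eq_add {φ : Table k N} (y : Fin N) {a : Fin k} {x : Fin N}
    (hx : φ a x = none) : #(hiddenChains φ y)
      = #{ω ∈ hiddenChains φ y | partialChain ω.1 ω.2 a = x}
        + N * #(hiddenChains (φ.assign a x y) y) := by
  have h := card_filter_chainPoint_ne hx y fun _ => True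
  simp only [and_true, filter_true] at h
  rw [sum_congr rfl fun r _ => card_hiddenChains_assign hx y r y, sum_const, card_univ,
    Fintype.card_fin, smul_eq_mul] at h
  rw [← h, card_filter_add_card_filter_not]

lemma card_filter_le_add_sum {φ : Table k N} (y : Fin N) {a : Fin k} {x : Fin N}
    (hx : φ a x = none) (E : Sample k N → Prop) [DecidablePred E] :
    #{ω ∈ hiddenChains φ y | E ω} ≤ #{ω ∈ hiddenChains φ y | partialChain ω.1 ω.2 a = x}
      + ∑ r, #{ω ∈ hiddenChains (φ.assign a x r) y | E ω} := by
  rw [← card_filter_chainPoint_ne hx y E]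
  refine (card_le_card fun ω hω => ?_).trans (card_union_le _ _)
  simp only [mem_union, mem_filter] at hω ⊢
  tauto

def solvedBy (ℓ : Fin k) (t : KAlg k N) (φ : Table k N) (y : Fin N) : Finset (Sample k N) :=
  {ω ∈ hiddenChains φ y | ω.1 ℓ (t.run ω.1) = y}

lemma solvedBy_query_of_eq_some (ℓ : Fin k) {a : Fin k} {x r : Fin N} (cont : Fin N → KAlg k N)
    {φ : Table k N} (hr : φ a x = some r) (y : Fin N) :
    solvedBy ℓ (.query a x cont) φ y = solvedBy ℓ (cont r) φ y :=
  filter_congr fun ω hω => by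
    rw [KAlg.run, (mem_hiddenChains.mp hω).1 a x r hr]

lemma output_arith {P t M n s : ℝ} (hn : 0 < n) (hs : 0 < s) (ht0 : 0 ≤ t) (ht : t * s ≤ P)
    (hP : t + n * M = P) : t + M ≤ P * (1 / n + 1 / s) := by
  have h1 : t ≤ P / s := by rwa [le_div_iff₀ hs]
  have h2 : M ≤ P / n := by
    rw [le_div_iff₀ hn]
    nlinarith
  calc t + M ≤ P / s + P / n := add_le_add h1 h2
    _ = P * (1 / n + 1 / s) := by ring

lemma query_arith {P t M n s m : ℝ} (hn : 0 < n) (hm : 0 ≤ m) (hs : m + 2 ≤ s) (ht0 : 0 ≤ t)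
    (ht : t * s ≤ P) (hP : t + n * M = P) :
    t + (n * M * ((m + 1) / n + (m + 1) / (s - 1)) + M) ≤ P * ((m + 2) / n + (m + 2) / s) := by
  set c := (m + 1) / (s - 1) with hc
  have hs1 : 0 < s - 1 := by linarith
  have hs0 : s ≠ 0 := by linarith
  have hc1 : c ≤ 1 := by rw [hc, div_le_one hs1]; linarith
  have hM : n * M = P - t := by linarith
  have key : c + (1 - c) / s = (m + 2) / s := by
    rw [hc]
    field_simp
    ring
  have hts : t * (1 - c) ≤ P / s * (1 - c) :=
    mul_le_mul_of_nonneg_right (by rwa [le_div_iff₀ (by linarith)]) (by linarith)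
  have hMn : M * (m + 2) ≤ P * (m + 2) / n := by
    rw [le_div_iff₀ hn]
    nlinarith
  calc t + (n * M * ((m + 1) / n + c) + M)
      = t * (1 - c) + P * c + M * (m + 2) := by
        rw [mul_add, mul_comm n M, mul_assoc, mul_div_cancel₀ _ hn.ne', mul_comm M n, hM]
        ring
    _ ≤ P / s * (1 - c) + P * c + P * (m + 2) / n := by linarith
    _ = P * ((m + 2) / n + (m + 2) / s) := by rw [← key]; ring

lemma card_solvedBy_output_le {ℓ : Fin k} {φ : Table k N} {y : Fin N}
    (hclean : φ.NeverAnswers ℓ y) {D : ℕ} (hD : φ.domCard ℓ ≤ D) (hDN : D < N)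
    (z : Fin N) :
    (#(solvedBy ℓ (.output z) φ y) : ℝ) ≤ #(hiddenChains φ y) * (1 / N + 1 / (N - D)) := by
  have hs : (0 : ℝ) < N - D := sub_pos.mpr (by exact_mod_cast hDN)
  have hn : (0 : ℝ) < N := by linarith [(D.cast_nonneg : (0 : ℝ) ≤ D)]
  cases hz : φ ℓ z with
  | some w =>
    have : solvedBy ℓ (.output z) φ y = ∅ :=
      filter_false_of_mem fun ω hω => by
        rw [KAlg.run, (mem_hiddenChains.mp hω).1 ℓ z w hz]
        exact hclean z w hz
    rw [this, card_empty, Nat.cast_zero]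
    positivity
  | none =>
    have hsum : ∑ r, #{ω ∈ hiddenChains (φ.assign ℓ z r) y | ω.1 ℓ z = y}
        ≤ #(hiddenChains (φ.assign ℓ z y) y) := by
      rw [sum_eq_single y fun r _ hry => card_eq_zero.mpr <| filter_false_of_mem fun ω hω => by
        rw [hiddenChains_assign hz, mem_filter] at hω
        rw [hω.2.2]
        exact hry]
      · exact card_filter_le _ _
      · simp
    have hsplit := (card_filter_le_add_sum y hz _).trans (Nat.add_le_add_left hsum _)
    have hchain := card_chainPoint_mul_le y hz hD
    have hP := card_hiddenChains_eq_add y hz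
    rw [← Nat.cast_le (α := ℝ)] at hsplit hchain
    rw [← Nat.cast_inj (R := ℝ)] at hP
    push_cast [hDN.le] at hsplit hchain hP
    exact hsplit.trans (output_arith hn hs (Nat.cast_nonneg _) hchain hP.symm)

lemma card_solvedBy_query_le_of_fresh {ℓ a : Fin k} {x : Fin N} {cont : Fin N → KAlg k N}
    {φ : Table k N} {y : Fin N} (hx : φ a x = none) {D m : ℕ} (hD : φ.domCard a ≤ D)
    (hDN : D + m + 2 ≤ N)
    (hcont : ∀ r, ¬(a = ℓ ∧ r = y) → (#(solvedBy ℓ (cont r) (φ.assign a x r) y) : ℝ)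
      ≤ #(hiddenChains (φ.assign a x r) y) * ((m + 1) / N + (m + 1) / (N - (D + 1)))) :
    (#(solvedBy ℓ (.query a x cont) φ y) : ℝ)
      ≤ #(hiddenChains φ y) * ((m + 2) / N + (m + 2) / (N - D)) := by
  set M := #(hiddenChains (φ.assign a x y) y)
  set B : ℝ := (m + 1) / N + (m + 1) / (N - (D + 1))
  have hNDm : (D : ℝ) + m + 2 ≤ N := by exact_mod_cast hDN
  have hn : (0 : ℝ) < N := by linarith [(D.cast_nonneg : (0 : ℝ) ≤ D), m.cast_nonneg (α := ℝ)]
  have hB : 0 ≤ B := add_nonneg (by positivity) (div_nonneg (by positivity) (by linarith))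
  have hanswer : ∀ r, (#(solvedBy ℓ (.query a x cont) (φ.assign a x r) y) : ℝ)
      ≤ M * B + if r = y then (M : ℝ) else 0 := by
    intro r
    rw [solvedBy_query_of_eq_some ℓ cont (r := r) (by simp [Table.assign]) y]
    have hM : #(hiddenChains (φ.assign a x r) y) = M := card_hiddenChains_assign hx y r y
    have hM0 : (0 : ℝ) ≤ M := M.cast_nonneg
    by_cases hbad : a = ℓ ∧ r = y
    -- `h_ℓ` answered `y`: the whole branch is counted as solved
    · rw [if_pos hbad.2]
      have : (#(solvedBy ℓ (cont r) (φ.assign a x r) y) : ℝ) ≤ M := by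
        rw [← hM]
        exact_mod_cast card_filter_le _ _
      nlinarith
    · have := hcont r hbad
      rw [hM] at this
      split_ifs <;> linarith
  have hsum : ∑ r, (#(solvedBy ℓ (.query a x cont) (φ.assign a x r) y) : ℝ) ≤ N * M * B + M := by
    refine (sum_le_sum fun r _ => hanswer r).trans_eq ?_
    simp [sum_add_distrib]
    ring
  have hsplit := card_filter_le_add_sum y hx fun ω => ω.1 ℓ ((KAlg.query a x cont).run ω.1) = y
  have hchain := card_chainPoint_mul_le y hx hD
  have hP := card_hiddenChains_eq_add y hx
  rw [← Nat.cast_le (α := ℝ)] at hsplit hchain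
  rw [← Nat.cast_inj (R := ℝ)] at hP
  push_cast [(by omega : D ≤ N)] at hsplit hchain hP
  calc _ ≤ _ := hsplit
    _ ≤ _ := add_le_add le_rfl hsum
    _ ≤ _ := by
      have := query_arith hn m.cast_nonneg (by linarith) (Nat.cast_nonneg _) hchain hP.symm
      convert this using 3
      ring

theorem card_solvedBy_le (ℓ : Fin k) (t : KAlg k N) {φ : Table k N} {y : Fin N} {D q : ℕ}
    (hclean : φ.NeverAnswers ℓ y) (hD : ∀ i, φ.domCard i ≤ D)
    (hq : t.numQueries ≤ q) (hDN : D + q + 1 ≤ N) :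
    (#(solvedBy ℓ t φ y) : ℝ) ≤ #(hiddenChains φ y) * ((q + 1) / N + (q + 1) / (N - D)) := by
  induction t generalizing φ D q with
  | output z =>
    refine (card_solvedBy_output_le hclean (hD ℓ) (by omega) z).trans ?_
    have hs : (0 : ℝ) < N - D := sub_pos.mpr (by exact_mod_cast (by omega : D < N))
    have hq1 : (1 : ℝ) ≤ q + 1 := by linarith [q.cast_nonneg (α := ℝ)]
    gcongr
  | query a x cont ih =>
    obtain ⟨m, rfl⟩ : ∃ m, q = m + 1 :=
      ⟨q - 1, by have := KAlg.numQueries_cont_lt (a := a) (x := x) cont ⟨0, by omega⟩; omega⟩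
    cases hx : φ a x with
    | some r =>
      rw [solvedBy_query_of_eq_some ℓ cont hx]
      exact ih r hclean hD ((KAlg.numQueries_cont_lt cont r).le.trans hq) hDN
    | none =>
      have key := card_solvedBy_query_le_of_fresh hx (hD a) (by omega) fun r hr => by
        have := ih r (D := D + 1) (q := m) (hclean.assign hr)
          (fun i => (φ.domCard_assign_le a x r i).trans (by have := hD i; omega))
          (by have := KAlg.numQueries_cont_lt (a := a) (x := x) cont r; omega) (by omega)
        push_cast at this
        exact this
      push_cast
      convert key using 4 <;> ring

lemma hiddenChains_empty (y : Fin N) :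
    hiddenChains (fun _ _ => none : Table k N) y
      = ({ω | chain ω.1 ω.2 = y} : Finset (Sample k N)) := by
  ext ω
  simp [mem_hiddenChains, chain_eq_partialChain]

theorem card_finds_preimage_le (ℓ : Fin k) (A : Fin N → KAlg k N) {T : ℕ}
    (hT : ∀ y, (A y).numQueries ≤ T) (hTN : T + 1 ≤ N) :
    (#{ω : Sample k N | ω.1 ℓ ((A (chain ω.1 ω.2)).run ω.1) = chain ω.1 ω.2} : ℝ)
      ≤ Fintype.card (Sample k N) * ((2 * T + 2) / N) := by
  rw [card_eq_sum_card_fiberwise (f := fun ω => chain ω.1 ω.2) (t := univ) fun _ _ => mem_univ _,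
    ← card_univ, card_eq_sum_card_fiberwise (f := fun ω => chain ω.1 ω.2) (t := univ)
      fun _ _ => mem_univ _]
  push_cast
  rw [sum_mul]
  refine sum_le_sum fun y _ => ?_
  have hfiber : ({ω ∈ {ω | ω.1 ℓ ((A (chain ω.1 ω.2)).run ω.1) = chain ω.1 ω.2} |
      chain ω.1 ω.2 = y} : Finset (Sample k N)) = solvedBy ℓ (A y) (fun _ _ => none) y := by
    ext ω
    simp only [solvedBy, hiddenChains_empty, mem_filter, mem_univ, true_and]
    constructor
    · rintro ⟨h, rfl⟩
      exact ⟨rfl, h⟩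
    · rintro ⟨rfl, h⟩
      exact ⟨h, rfl⟩
  rw [hfiber, ← hiddenChains_empty]
  refine (card_solvedBy_le ℓ (A y) (fun _ _ => by simp) (by simp [Table.domCard]) (hT y) (D := 0)
    (by omega)).trans_eq ?_
  push_cast
  ring

end ChainPreimage

open ChainPreimage in
/-- Let `h₁,...,h_k : [N] → [N]` be independent uniformly
random functions. Any algorithm `A` with oracle access to the `h_i` making at
most `T` oracle queries in total finds, given `h_{[1,k]}(x₀)` for uniform
`x₀`, a preimage under the last function `h_k` with probability at most
`(2T+3)/N`. -/
theorem stmt1 (N k T : ℕ) (hN : 0 < N) (hk : 0 < k)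
    (A : Fin N → KAlg k N) (hT : ∀ y : Fin N, (A y).numQueries ≤ T) :
    ((Finset.univ.filter (fun p : (Fin k → Fin N → Fin N) × Fin N =>
        p.1 ⟨k - 1, by omega⟩ ((A (chain p.1 p.2)).run p.1) = chain p.1 p.2)).card : ℝ) /
      (Fintype.card ((Fin k → Fin N → Fin N) × Fin N)) ≤ (2 * T + 3) / N := by
  have : Nonempty (Fin N) := ⟨⟨0, hN⟩⟩
  have hΩ : (0 : ℝ) < Fintype.card ((Fin k → Fin N → Fin N) × Fin N) := by
    exact_mod_cast Fintype.card_pos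
  have hN' : (0 : ℝ) < N := by exact_mod_cast hN
  rw [div_le_iff₀ hΩ]
  by_cases hTN : T + 1 ≤ N
  · refine (card_finds_preimage_le _ A hT hTN).trans ?_
    rw [mul_comm]
    gcongr
    linarith
  · have h1 : (1 : ℝ) ≤ (2 * T + 3) / N := by
      rw [one_le_div hN']
      exact_mod_cast (by omega : N ≤ 2 * T + 3)
    calc _ ≤ (Fintype.card ((Fin k → Fin N → Fin N) × Fin N) : ℝ) := by
          exact_mod_cast card_le_univ _
      _ ≤ _ := le_mul_of_one_le_left hΩ.le h1
end

section
/- Let h₁,...,h_k : [N] → [N] be independent uniformly random functions. Any algorithm A with oracle access to the h_i making at most T total oracle queries satisfies: the probability over the functions and over uniform x₀ ∈ [N] that A, on input y = h_{[1,k]}(x₀), outputs z with h_{[1,k]}(z) = y is at most (2T+2k+1)/N. -/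
open Finset

namespace KAlg

variable {k N : ℕ}

def bind : KAlg k N → (Fin N → KAlg k N) → KAlg k N
  | output z, f => f z
  | query i x cont, f => query i x fun a => bind (cont a) f

def queries : KAlg k N → (Fin k → Fin N → Fin N) → List (Fin k × Fin N)
  | output _, _ => []
  | query i x cont, g => (i, x) :: queries (cont (g i x)) g

def Receives (B : KAlg k N) (g : Fin k → Fin N → Fin N) (i : Fin k) (t : Fin N) : Prop :=
  ∃ x, (i, x) ∈ B.queries g ∧ g i x = t

instance (B : KAlg k N) (g : Fin k → Fin N → Fin N) (i : Fin k) (t : Fin N) :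
    Decidable (B.Receives g i t) := by
  unfold Receives; infer_instance

theorem le_numQueries_query {i : Fin k} {x : Fin N} {cont : Fin N → KAlg k N} (a : Fin N) :
    (cont a).numQueries + 1 ≤ (query i x cont).numQueries := by
  have := le_sup (f := fun y => (cont y).numQueries) (mem_univ a)
  simp only [numQueries]
  omega

theorem run_bind (B : KAlg k N) (f : Fin N → KAlg k N) (g : Fin k → Fin N → Fin N) :
    (B.bind f).run g = (f (B.run g)).run g := by
  induction B with
  | output z => rfl
  | query i x cont ih => exact ih (g i x)

theorem queries_bind (B : KAlg k N) (f : Fin N → KAlg k N) (g : Fin k → Fin N → Fin N) :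
    (B.bind f).queries g = B.queries g ++ (f (B.run g)).queries g := by
  induction B with
  | output z => rfl
  | query i x cont ih => simp [bind, queries, run, ih]

theorem numQueries_bind_le (B : KAlg k N) (f : Fin N → KAlg k N) {Q : ℕ}
    (hf : ∀ z, (f z).numQueries ≤ Q) : (B.bind f).numQueries ≤ B.numQueries + Q := by
  induction B with
  | output z => simpa [bind, numQueries] using hf z
  | query i x cont ih =>
    simp only [bind, numQueries]
    have : (univ.sup fun y => ((cont y).bind f).numQueries) ≤
        (univ.sup fun y => (cont y).numQueries) + Q :=
      Finset.sup_le fun y _ => (ih y).trans (by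
        gcongr; exact le_sup (f := fun y => (cont y).numQueries) (mem_univ y))
    omega

theorem length_queries_le (B : KAlg k N) (g : Fin k → Fin N → Fin N) :
    (B.queries g).length ≤ B.numQueries := by
  induction B with
  | output z => simp [queries, numQueries]
  | query i x cont ih =>
    have := le_numQueries_query (i := i) (x := x) (cont := cont) (g i x)
    simp only [queries, List.length_cons]
    linarith [ih (g i x)]

theorem run_congr (B : KAlg k N) {g h : Fin k → Fin N → Fin N}
    (hgh : ∀ p ∈ B.queries g, h p.1 p.2 = g p.1 p.2) : B.run h = B.run g := by
  induction B with
  | output z => rfl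
  | query i x cont ih =>
    simp only [queries, List.mem_cons, forall_eq_or_imp] at hgh
    simp only [run, hgh.1]
    exact ih _ hgh.2

def ofList : List (Fin k) → Fin N → KAlg k N
  | [], z => output z
  | i :: l, z => query i z (ofList l)

theorem run_ofList (l : List (Fin k)) (z : Fin N) (g : Fin k → Fin N → Fin N) :
    (ofList l z).run g = l.foldl (fun y i => g i y) z := by
  induction l generalizing z with
  | nil => rfl
  | cons i l ih => exact ih (g i z)

theorem numQueries_ofList_le (l : List (Fin k)) (z : Fin N) :
    (ofList l z).numQueries ≤ l.length := by
  induction l generalizing z with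
  | nil => simp [ofList, numQueries]
  | cons i l ih =>
    simp only [ofList, numQueries, List.length_cons]
    have := Finset.sup_le (s := univ) (f := fun a => (ofList l a).numQueries) fun a _ => ih a
    omega

theorem receives_ofList_append_singleton (l : List (Fin k)) (i : Fin k) (z : Fin N)
    (g : Fin k → Fin N → Fin N) :
    (ofList (l ++ [i]) z).Receives g i ((ofList (l ++ [i]) z).run g) := by
  induction l generalizing z with
  | nil => exact ⟨z, by simp [ofList, queries], rfl⟩
  | cons j l ih =>
    obtain ⟨x, hx, hgx⟩ := ih (g j z)
    exact ⟨x, List.mem_cons_of_mem _ hx, hgx⟩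

def thenChain (B : KAlg k N) : KAlg k N :=
  B.bind (ofList (List.finRange k))

theorem run_thenChain (B : KAlg k N) (g : Fin k → Fin N → Fin N) :
    B.thenChain.run g = chain g (B.run g) := by
  rw [thenChain, run_bind, run_ofList, chain]

theorem numQueries_thenChain_le (B : KAlg k N) : B.thenChain.numQueries ≤ B.numQueries + k :=
  numQueries_bind_le B _ fun z => by simpa using numQueries_ofList_le (List.finRange k) z

theorem receives_thenChain {m : ℕ} (B : KAlg (m + 1) N) (g : Fin (m + 1) → Fin N → Fin N) :
    B.thenChain.Receives g (Fin.last m) (B.thenChain.run g) := by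
  obtain ⟨x, hx, hgx⟩ := receives_ofList_append_singleton ((List.finRange m).map Fin.castSucc)
    (Fin.last m) (B.run g) g
  refine ⟨x, ?_, ?_⟩
  · rw [thenChain, queries_bind, List.finRange_succ_last]
    exact List.mem_append_right _ hx
  · rw [hgx, thenChain, run_bind, List.finRange_succ_last]

end KAlg

section Consistent

variable {ι α β : Type*} [Fintype ι] [DecidableEq ι] [Fintype α] [DecidableEq α] [Fintype β]

/-- `σ p = some b` forces `g p.1 p.2 = b`; `σ p = none` leaves it free. -/
def consistentOracles (σ : ι × α → Option β) : Finset (ι → α → β) :=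
  Fintype.piFinset fun i => Fintype.piFinset fun x => (σ (i, x)).elim univ singleton

theorem mem_consistentOracles {σ : ι × α → Option β} {g : ι → α → β} :
    g ∈ consistentOracles σ ↔ ∀ p b, σ p = some b → g p.1 p.2 = b := by
  simp only [consistentOracles, Fintype.mem_piFinset, Prod.forall]
  refine forall₂_congr fun i x => ?_
  cases σ (i, x) <;> simp [eq_comm]

@[simp]
theorem consistentOracles_none :
    consistentOracles (fun _ : ι × α => (none : Option β)) = univ := by
  ext g; simp [mem_consistentOracles]

theorem card_consistentOracles (σ : ι × α → Option β) :
    #(consistentOracles σ) = ∏ p : ι × α, #((σ p).elim univ singleton) := by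
  rw [consistentOracles, Fintype.card_piFinset, Fintype.prod_prod_type]
  simp only [Fintype.card_piFinset]

theorem card_consistentOracles_eq_mul_update {σ : ι × α → Option β} {p : ι × α}
    (hp : σ p = none) (b : β) :
    #(consistentOracles σ) =
      Fintype.card β * #(consistentOracles (Function.update σ p (some b))) := by
  rw [card_consistentOracles, card_consistentOracles, Fintype.prod_eq_mul_prod_compl p,
    Fintype.prod_eq_mul_prod_compl p, Function.update_self, hp]
  simp only [Option.elim_none, card_univ, Option.elim_some, card_singleton, one_mul]
  congr 1
  refine prod_congr rfl fun q hq => ?_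
  rw [Function.update_of_ne (by simpa using hq)]

theorem filter_consistentOracles_apply_eq [DecidableEq β] {σ : ι × α → Option β}
    {p : ι × α} (hp : σ p = none) (b : β) :
    (consistentOracles σ).filter (fun g => g p.1 p.2 = b) =
      consistentOracles (Function.update σ p (some b)) := by
  ext g
  simp only [mem_filter, mem_consistentOracles]
  constructor
  · rintro ⟨hg, hgb⟩ q c hq
    rcases eq_or_ne q p with rfl | hqp
    · simp only [Function.update_self, Option.some.injEq] at hq
      rw [hgb, hq]
    · exact hg q c (by rwa [Function.update_of_ne hqp] at hq)
  · intro hg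
    refine ⟨fun q c hq => hg q c ?_, hg p b (by simp)⟩
    rwa [Function.update_of_ne (by rintro rfl; simp [hp] at hq)]

theorem card_filter_consistentOracles_eq_sum [DecidableEq β] {σ : ι × α → Option β}
    {p : ι × α} (hp : σ p = none) (E : (ι → α → β) → Prop) [DecidablePred E] :
    #((consistentOracles σ).filter E) =
      ∑ b, #((consistentOracles (Function.update σ p (some b))).filter E) := by
  rw [card_eq_sum_card_fiberwise (f := fun g => g p.1 p.2) (t := univ) fun _ _ => mem_univ _]
  refine sum_congr rfl fun b _ => ?_
  rw [filter_filter, ← filter_consistentOracles_apply_eq hp, filter_filter]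
  simp only [and_comm]

end Consistent

namespace KAlg

variable {k N : ℕ}

theorem receives_query_iff {j i : Fin k} {x t : Fin N} {cont : Fin N → KAlg k N}
    {g : Fin k → Fin N → Fin N} :
    (query j x cont).Receives g i t ↔
      (j = i ∧ g j x = t) ∨ (cont (g j x)).Receives g i t := by
  simp only [Receives, queries, List.mem_cons, Prod.ext_iff]
  constructor
  · rintro ⟨y, ⟨rfl, rfl⟩ | hy, hgy⟩
    · exact Or.inl ⟨rfl, hgy⟩
    · exact Or.inr ⟨y, hy, hgy⟩
  · rintro (⟨rfl, hgt⟩ | ⟨y, hy, hgy⟩)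
    · exact ⟨x, Or.inl ⟨rfl, rfl⟩, hgt⟩
    · exact ⟨y, Or.inr hy, hgy⟩

theorem filter_receives_query_eq {σ : Fin k × Fin N → Option (Fin N)} {j i : Fin k}
    {x a t : Fin N} {cont : Fin N → KAlg k N} (hp : σ (j, x) = some a)
    (hfixed : ¬(j = i ∧ a = t)) :
    (consistentOracles σ).filter (fun g => (query j x cont).Receives g i t) =
      (consistentOracles σ).filter fun g => (cont a).Receives g i t := by
  refine filter_congr fun g hg => ?_
  rw [receives_query_iff, mem_consistentOracles.1 hg (j, x) a hp]
  simp [hfixed]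

/-- Lazy sampling: as long as no answer `t` from oracle `i` is fixed in advance, each query
receives it with probability at most `1 / N`. -/
theorem card_filter_receives_le (B : KAlg k N) (i : Fin k) (t : Fin N)
    {σ : Fin k × Fin N → Option (Fin N)} (hσ : ∀ x, σ (i, x) ≠ some t) :
    N * #((consistentOracles σ).filter fun g => B.Receives g i t) ≤
      B.numQueries * #(consistentOracles σ) := by
  induction B generalizing σ with
  | output z => simp [Receives, queries]
  | query j x cont ih =>
    set s := univ.sup fun y => (cont y).numQueries
    have hs : ∀ a, (cont a).numQueries ≤ s := fun a =>
      le_sup (f := fun y => (cont y).numQueries) (mem_univ a)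
    simp only [numQueries]
    cases hp : σ (j, x) with
    | some a =>
      rw [filter_receives_query_eq hp fun ⟨hji, hat⟩ => hσ x (hji ▸ hat ▸ hp)]
      exact (ih a hσ).trans (Nat.mul_le_mul_right _ ((hs a).trans (Nat.le_add_left _ _)))
    | none =>
      set C := #(consistentOracles σ) with hC
      set σ' := fun a => Function.update σ (j, x) (some a)
      have hcell : ∀ a, N * #((consistentOracles (σ' a)).filter
          fun g => (query j x cont).Receives g i t) ≤
          (if a = t then C else 0) + s * #(consistentOracles (σ' a)) := by
        intro a
        by_cases hat : a = t
        · subst hat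
          rw [if_pos rfl, hC, card_consistentOracles_eq_mul_update hp a, Fintype.card_fin]
          exact (Nat.mul_le_mul_left _ (card_filter_le _ _)).trans (Nat.le_add_right _ _)
        · rw [if_neg hat, zero_add, filter_receives_query_eq (by simp [σ']) fun h => hat h.2]
          refine (ih a fun y => ?_).trans (Nat.mul_le_mul_right _ (hs a))
          rcases eq_or_ne (i, y) (j, x) with hy | hy
          · simp [σ', hy, hat]
          · simpa [σ', Function.update_of_ne hy] using hσ y
      calc N * #((consistentOracles σ).filter fun g => (query j x cont).Receives g i t)
          = ∑ a, N * #((consistentOracles (σ' a)).filter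
              fun g => (query j x cont).Receives g i t) := by
            rw [card_filter_consistentOracles_eq_sum hp, mul_sum]
        _ ≤ ∑ a, ((if a = t then C else 0) + s * #(consistentOracles (σ' a))) :=
            sum_le_sum fun a _ => hcell a
        _ = C + s * C := by
            rw [sum_add_distrib, sum_ite_eq' univ t, if_pos (mem_univ t), ← mul_sum]
            congr 2
            simpa using (card_filter_consistentOracles_eq_sum hp fun _ => True).symm
        _ = (1 + s) * C := by ring

theorem card_filter_receives_univ_le (B : KAlg k N) (i : Fin k) (t : Fin N) :
    N * #(univ.filter fun g => B.Receives g i t) ≤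
      B.numQueries * Fintype.card (Fin k → Fin N → Fin N) := by
  simpa using card_filter_receives_le B i t (σ := fun _ => none) (by simp)

end KAlg

section Reroute

variable {k : ℕ} {α : Type*}

def trajectory (h : Fin k → α → α) (x : α) : Fin (k + 1) → α :=
  Fin.induction x fun i y => h i y

@[simp]
theorem trajectory_zero (h : Fin k → α → α) (x : α) : trajectory h x 0 = x := rfl

theorem trajectory_succ (h : Fin k → α → α) (x : α) (i : Fin k) :
    trajectory h x i.succ = h i (trajectory h x i.castSucc) :=
  Fin.induction_succ _ _ i

theorem trajectory_castSucc (h : Fin (k + 1) → α → α) (x : α) (j : Fin (k + 1)) :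
    trajectory h x j.castSucc = trajectory (fun i => h i.castSucc) x j := by
  induction j using Fin.induction with
  | zero => rfl
  | succ j ih => rw [← Fin.succ_castSucc, trajectory_succ, trajectory_succ, ih]

theorem chain_succ {m N : ℕ} (h : Fin (m + 1) → Fin N → Fin N) (x : Fin N) :
    chain h x = h (Fin.last m) (chain (fun i => h i.castSucc) x) := by
  simp only [chain, ← Fin.foldl_eq_foldl_finRange, Fin.foldl_succ_last]

theorem trajectory_last {N : ℕ} (h : Fin k → Fin N → Fin N) (x : Fin N) :
    trajectory h x (Fin.last k) = chain h x := by
  induction k with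
  | zero => simp [chain]
  | succ m ih =>
    rw [chain_succ, ← ih, ← trajectory_castSucc, ← trajectory_succ h x (Fin.last m),
      Fin.succ_last]

def reroute [DecidableEq α] (g : Fin k → α → α) (c : Fin (k + 1) → α) :
    Fin k → α → α :=
  fun i => Function.update (g i) (c i.castSucc) (c i.succ)

theorem trajectory_reroute [DecidableEq α] (g : Fin k → α → α) (c : Fin (k + 1) → α) :
    trajectory (reroute g c) (c 0) = c := by
  funext j
  induction j using Fin.induction with
  | zero => rfl
  | succ i ih => rw [trajectory_succ, ih, reroute, Function.update_self]

def rerouteEquiv [DecidableEq α] :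
    (Fin k → α → α) × (Fin (k + 1) → α) ≃
      ((Fin k → α → α) × α) × (Fin k → α) where
  toFun q := ((reroute q.1 q.2, q.2 0), fun i => q.1 i (q.2 i.castSucc))
  invFun r := (fun i => Function.update (r.1.1 i) (trajectory r.1.1 r.1.2 i.castSucc) (r.2 i),
    trajectory r.1.1 r.1.2)
  left_inv := by
    rintro ⟨g, c⟩
    simp [trajectory_reroute, reroute]
  right_inv := by
    rintro ⟨⟨h, x⟩, u⟩
    refine Prod.ext (Prod.ext (funext fun i => ?_) rfl) (funext fun i => by simp)
    simp [reroute, trajectory_succ]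

theorem card_filter_reroute [Fintype α] [DecidableEq α] (P : (Fin k → α → α) × α → Prop)
    [DecidablePred P] :
    #(univ.filter fun q : (Fin k → α → α) × (Fin (k + 1) → α) =>
        P (reroute q.1 q.2, q.2 0)) =
      Fintype.card (Fin k → α) * #(univ.filter P) := by
  rw [card_equiv rerouteEquiv (t := univ.filter P ×ˢ univ) (by simp [rerouteEquiv]),
    card_product, card_univ, mul_comm]

end Reroute

section Counting

variable {ι α β : Type*}

theorem card_filter_prod_eq_sum_left [Fintype α] [Fintype β] (P : α → β → Prop)
    [∀ a b, Decidable (P a b)] :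
    #(univ.filter fun q : α × β => P q.1 q.2) = ∑ a, #(univ.filter fun b => P a b) := by
  simp only [card_filter, Fintype.sum_prod_type]

theorem card_filter_prod_eq_sum_right [Fintype α] [Fintype β] (P : α → β → Prop)
    [∀ a b, Decidable (P a b)] :
    #(univ.filter fun q : α × β => P q.1 q.2) = ∑ b, #(univ.filter fun a => P a b) := by
  rw [card_filter_prod_eq_sum_left]
  simp only [card_filter]
  exact sum_comm

theorem sum_card_filter_mem_le_length [Fintype ι] [Fintype α] [DecidableEq ι] [DecidableEq α]
    (L : List (ι × α)) : ∑ i, #(univ.filter fun x => (i, x) ∈ L) ≤ L.length := by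
  rw [← card_filter_prod_eq_sum_left fun i x => (i, x) ∈ L]
  calc #(univ.filter fun q : ι × α => (q.1, q.2) ∈ L) = #L.toFinset := by
        congr 1; ext; simp
    _ ≤ L.length := List.toFinset_card_le L

variable [Fintype β] [DecidableEq β]

theorem card_filter_apply_mem_mul [Fintype ι] [DecidableEq ι] (i : ι) (s : Finset β) :
    #(univ.filter fun c : ι → β => c i ∈ s) * Fintype.card β =
      Fintype.card (ι → β) * #s := by
  let e := Equiv.funSplitAt i β
  rw [card_equiv e (t := s ×ˢ univ) (by simp [e]), card_product, card_univ,
    Fintype.card_congr e, Fintype.card_prod]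
  ring

theorem card_filter_exists_apply_mem_mul_le [Fintype ι] [DecidableEq ι] (s : ι → Finset β) :
    #(univ.filter fun c : ι → β => ∃ i, c i ∈ s i) * Fintype.card β ≤
      Fintype.card (ι → β) * ∑ i, #(s i) := by
  have hunion : univ.filter (fun c : ι → β => ∃ i, c i ∈ s i) ⊆
      univ.biUnion fun i => univ.filter fun c : ι → β => c i ∈ s i := by
    intro c; simp
  calc #(univ.filter fun c : ι → β => ∃ i, c i ∈ s i) * Fintype.card β
      ≤ (∑ i, #(univ.filter fun c : ι → β => c i ∈ s i)) * Fintype.card β := by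
        gcongr; exact (card_le_card hunion).trans card_biUnion_le
    _ = Fintype.card (ι → β) * ∑ i, #(s i) := by
        rw [sum_mul, mul_sum]
        exact sum_congr rfl fun i _ => card_filter_apply_mem_mul i (s i)

theorem card_filter_exists_castSucc_mem_mul_le {n B : ℕ} (S : β → Fin n → Finset β)
    (hS : ∀ y, ∑ i, #(S y i) ≤ B) :
    #(univ.filter fun c : Fin (n + 1) → β => ∃ i, c i.castSucc ∈ S (c (Fin.last n)) i) *
      Fintype.card β ≤ Fintype.card (Fin (n + 1) → β) * B := by
  have hsplit : #(univ.filter fun c : Fin (n + 1) → β =>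
      ∃ i, c i.castSucc ∈ S (c (Fin.last n)) i) =
      #(univ.filter fun q : β × (Fin n → β) => ∃ i, q.2 i ∈ S q.1 i) :=
    card_equiv (Fin.snocEquiv fun _ => β).symm (by simp [Fin.init])
  rw [hsplit, card_filter_prod_eq_sum_left (fun y (c : Fin n → β) => ∃ i, c i ∈ S y i),
    sum_mul]
  calc ∑ y, #(univ.filter fun c : Fin n → β => ∃ i, c i ∈ S y i) * Fintype.card β
      ≤ ∑ _y : β, Fintype.card (Fin n → β) * B := sum_le_sum fun y _ => by
        convert (card_filter_exists_apply_mem_mul_le (S y)).trans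
          (Nat.mul_le_mul_left _ (hS y))
    _ = Fintype.card (Fin (n + 1) → β) * B := by
        simp only [sum_const, card_univ, smul_eq_mul, Fintype.card_fun, Fintype.card_fin]
        ring

end Counting

section Inversion

variable {m N T : ℕ} (A : Fin N → KAlg (m + 1) N)

theorem exists_mem_queries_or_receives_of_reroute {g : Fin (m + 1) → Fin N → Fin N}
    {c : Fin (m + 2) → Fin N}
    (hinv : chain (reroute g c) ((A (chain (reroute g c) (c 0))).run (reroute g c)) =
      chain (reroute g c) (c 0)) :
    (∃ i, (i, c i.castSucc) ∈ (A (c (Fin.last _))).thenChain.queries g) ∨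
      (A (c (Fin.last _))).thenChain.Receives g (Fin.last m) (c (Fin.last _)) := by
  refine or_iff_not_imp_left.2 fun hfresh => ?_
  simp only [not_exists] at hfresh
  have htarget : chain (reroute g c) (c 0) = c (Fin.last _) := by
    rw [← trajectory_last, trajectory_reroute]
  rw [htarget, ← KAlg.run_thenChain] at hinv
  have hagree : (A (c (Fin.last _))).thenChain.run (reroute g c) =
      (A (c (Fin.last _))).thenChain.run g :=
    KAlg.run_congr _ fun p hp =>
      Function.update_of_ne (fun hpc => hfresh p.1 (by rw [← hpc]; exact hp)) _ _
  rw [hagree] at hinv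
  simpa [hinv] using KAlg.receives_thenChain (A (c (Fin.last _))) g

theorem card_mul_filter_chain_inverted_le_add :
    Fintype.card (Fin (m + 1) → Fin N) *
        #(univ.filter fun p : (Fin (m + 1) → Fin N → Fin N) × Fin N =>
          chain p.1 ((A (chain p.1 p.2)).run p.1) = chain p.1 p.2) ≤
      #(univ.filter fun q : (Fin (m + 1) → Fin N → Fin N) × (Fin (m + 2) → Fin N) =>
          ∃ i, (i, q.2 i.castSucc) ∈ (A (q.2 (Fin.last _))).thenChain.queries q.1) +
        #(univ.filter fun q : (Fin (m + 1) → Fin N → Fin N) × (Fin (m + 2) → Fin N) =>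
          (A (q.2 (Fin.last _))).thenChain.Receives q.1 (Fin.last m) (q.2 (Fin.last _))) := by
  rw [← card_filter_reroute]
  refine (card_le_card fun q hq => ?_).trans (card_union_le _ _)
  simp only [mem_filter, mem_univ, true_and, mem_union] at hq ⊢
  exact exists_mem_queries_or_receives_of_reroute A hq

variable {A}

theorem card_filter_exists_mem_queries_le (hT : ∀ y, (A y).numQueries ≤ T)
    (g : Fin (m + 1) → Fin N → Fin N) :
    N * #(univ.filter fun c : Fin (m + 2) → Fin N =>
        ∃ i, (i, c i.castSucc) ∈ (A (c (Fin.last _))).thenChain.queries g) ≤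
      Fintype.card (Fin (m + 2) → Fin N) * (T + (m + 1)) := by
  have hS : ∀ y,
      ∑ i, #(univ.filter fun x => (i, x) ∈ (A y).thenChain.queries g) ≤ T + (m + 1) :=
    fun y => (sum_card_filter_mem_le_length _).trans <| (KAlg.length_queries_le _ g).trans <|
      (KAlg.numQueries_thenChain_le _).trans (Nat.add_le_add_right (hT y) _)
  have := card_filter_exists_castSucc_mem_mul_le _ hS
  simp only [mem_filter, mem_univ, true_and, Fintype.card_fin] at this
  rwa [mul_comm] at this

theorem card_filter_receives_thenChain_le (hT : ∀ y, (A y).numQueries ≤ T) (y : Fin N) :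
    N * #(univ.filter fun g => (A y).thenChain.Receives g (Fin.last m) y) ≤
      (T + (m + 1)) * Fintype.card (Fin (m + 1) → Fin N → Fin N) :=
  (KAlg.card_filter_receives_univ_le _ _ _).trans <| Nat.mul_le_mul_right _ <|
    (KAlg.numQueries_thenChain_le _).trans (Nat.add_le_add_right (hT y) _)

theorem card_filter_prod_exists_mem_queries_le (hT : ∀ y, (A y).numQueries ≤ T) :
    N * #(univ.filter fun q : (Fin (m + 1) → Fin N → Fin N) × (Fin (m + 2) → Fin N) =>
        ∃ i, (i, q.2 i.castSucc) ∈ (A (q.2 (Fin.last _))).thenChain.queries q.1) ≤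
      Fintype.card (Fin (m + 1) → Fin N → Fin N) *
        (Fintype.card (Fin (m + 2) → Fin N) * (T + (m + 1))) := by
  rw [card_filter_prod_eq_sum_left (fun g (c : Fin (m + 2) → Fin N) =>
    ∃ i, (i, c i.castSucc) ∈ (A (c (Fin.last _))).thenChain.queries g), mul_sum]
  refine (sum_le_sum fun g _ => card_filter_exists_mem_queries_le hT g).trans ?_
  rw [sum_const, card_univ, smul_eq_mul]

theorem card_filter_prod_receives_le (hT : ∀ y, (A y).numQueries ≤ T) :
    N * #(univ.filter fun q : (Fin (m + 1) → Fin N → Fin N) × (Fin (m + 2) → Fin N) =>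
        (A (q.2 (Fin.last _))).thenChain.Receives q.1 (Fin.last m) (q.2 (Fin.last _))) ≤
      Fintype.card (Fin (m + 2) → Fin N) *
        ((T + (m + 1)) * Fintype.card (Fin (m + 1) → Fin N → Fin N)) := by
  rw [card_filter_prod_eq_sum_right (fun g (c : Fin (m + 2) → Fin N) =>
    (A (c (Fin.last _))).thenChain.Receives g (Fin.last m) (c (Fin.last _))), mul_sum]
  refine (sum_le_sum fun c _ => card_filter_receives_thenChain_le hT _).trans ?_
  rw [sum_const, card_univ, smul_eq_mul]

theorem card_filter_chain_inverted_le (hN : 0 < N) (hT : ∀ y, (A y).numQueries ≤ T) :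
    #(univ.filter fun p : (Fin (m + 1) → Fin N → Fin N) × Fin N =>
        chain p.1 ((A (chain p.1 p.2)).run p.1) = chain p.1 p.2) ≤
      2 * (T + (m + 1)) * Fintype.card (Fin (m + 1) → Fin N → Fin N) := by
  have hsplit := Nat.mul_le_mul_left N (card_mul_filter_chain_inverted_le_add A)
  have hqueries := card_filter_prod_exists_mem_queries_le hT
  have hreceives := card_filter_prod_receives_le hT
  have hC : Fintype.card (Fin (m + 2) → Fin N) = Fintype.card (Fin (m + 1) → Fin N) * N := by
    simp only [Fintype.card_fun, Fintype.card_fin, pow_succ]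
  rw [hC] at hqueries hreceives
  have hU : 0 < Fintype.card (Fin (m + 1) → Fin N) :=
    Fintype.card_pos_iff.2 ⟨fun _ => ⟨0, hN⟩⟩
  refine Nat.le_of_mul_le_mul_left ?_ (Nat.mul_pos hU hN)
  linarith

end Inversion

/-- Let `h₁,...,h_k : [N] → [N]` be independent uniformly
random functions. Any algorithm `A` with oracle access to the `h_i` making at
most `T` total oracle queries finds, given `y = h_{[1,k]}(x₀)` for uniform
`x₀`, a point `z` with `h_{[1,k]}(z) = y` with probability at most
`(2T+2k+1)/N`. -/
theorem stmt2 (N k T : ℕ) (hN : 0 < N) (hk : 0 < k)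
    (A : Fin N → KAlg k N) (hT : ∀ y : Fin N, (A y).numQueries ≤ T) :
    ((Finset.univ.filter (fun p : (Fin k → Fin N → Fin N) × Fin N =>
        chain p.1 ((A (chain p.1 p.2)).run p.1) = chain p.1 p.2)).card : ℝ) /
      (Fintype.card ((Fin k → Fin N → Fin N) × Fin N)) ≤ (2 * T + 2 * k + 1) / N := by
  obtain ⟨m, rfl⟩ := Nat.exists_eq_add_one_of_ne_zero hk.ne'
  set G := Fintype.card (Fin (m + 1) → Fin N → Fin N)
  have hG : (0 : ℝ) < G := Nat.cast_pos.2 (Fintype.card_pos_iff.2 ⟨fun _ _ => ⟨0, hN⟩⟩)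
  rw [Fintype.card_prod, Fintype.card_fin, Nat.cast_mul]
  calc _ ≤ (2 * (T + (m + 1)) * G : ℕ) / ((G : ℝ) * N) := by
        gcongr; exact card_filter_chain_inverted_le hN hT
    _ = 2 * (T + (m + 1)) / N := by push_cast; field_simp
    _ ≤ _ := by gcongr; push_cast; linarith
end

section
/- Let h₁,...,h_k : [N] → [N] be independent uniformly random functions and fix x ∈ [N]. Define L = |{x' ∈ [N] : h_{[1,k]}(x') = h_{[1,k]}(x)}|, the number of preimages of h_{[1,k]}(x). Then E[L] = 1 + (N−1)(1 − (1−1/N)^k); in particular, E[L] ≥ k + 1 − k²/N and E[L] ≤ k + 1. -/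
/-- The number of preimages of `h_{[1,k]}(x)` under `h_{[1,k]}`. -/
def numPreimages {k N : ℕ} (h : Fin k → Fin N → Fin N) (x : Fin N) : ℕ :=
  (Finset.univ.filter (fun x' : Fin N => chain h x' = chain h x)).card

/-!
By linearity of expectation, `E[L] = ∑ x', P(h_{[1,k]} x' = h_{[1,k]} x)`. A pair of distinct
points stays separated along the chain exactly when each of the `k` independent functions
separates the current pair, which a uniform function does with probability `1 - 1/N`; once
merged, a pair stays merged. Hence a collision has probability `1 - (1 - 1/N)^k`. The resulting
closed form is the geometric sum `∑_{i ≤ k} (1 - 1/N)^i`, whose terms lie between `1 - i/N`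
(Bernoulli) and `1`.
-/

open Finset

theorem card_filter_apply_ne_apply {α β : Type*} [Fintype α] [DecidableEq α] [Fintype β]
    [DecidableEq β] {y z : α} (hyz : y ≠ z) :
    #{f : α → β | f y ≠ f z} =
      (Fintype.card β - 1) * Fintype.card β ^ (Fintype.card α - 1) := by
  rw [card_filter, Fintype.sum_equiv (Equiv.funSplitAt z β) _
    (fun p => if p.2 ⟨y, hyz⟩ ≠ p.1 then 1 else 0) (fun _ => by simp),
    Fintype.sum_prod_type_right]
  have hsep : ∀ g : {j // j ≠ z} → β,
      ∑ b : β, (if g ⟨y, hyz⟩ ≠ b then 1 else 0) = Fintype.card β - 1 := by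
    intro g
    rw [← card_filter, filter_ne, card_erase_of_mem (mem_univ _), card_univ]
  simp only [hsep, sum_const, card_univ, Fintype.card_fun, Fintype.card_subtype_compl,
    Fintype.card_subtype_eq, smul_eq_mul, mul_comm]

theorem chain_cons {k N : ℕ} (f : Fin N → Fin N) (h : Fin k → Fin N → Fin N) (x : Fin N) :
    chain (Fin.cons f h) x = chain h (f x) := by
  simp [chain, List.finRange_succ, List.foldl_map]

theorem card_filter_chain_ne {N : ℕ} (k : ℕ) {y z : Fin N} (hyz : y ≠ z) :
    #{h : Fin k → Fin N → Fin N | chain h y ≠ chain h z} = ((N - 1) * N ^ (N - 1)) ^ k := by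
  induction k generalizing y z with
  | zero => simp [chain, hyz]
  | succ k ih =>
    have hfirst : ∀ f : Fin N → Fin N,
        #{h : Fin k → Fin N → Fin N | chain h (f y) ≠ chain h (f z)}
          = if f y ≠ f z then ((N - 1) * N ^ (N - 1)) ^ k else 0 := by
      intro f
      split_ifs with hf
      · exact ih hf
      · simp_all
    rw [card_filter, ← Fintype.sum_equiv (Fin.consEquiv fun _ => Fin N → Fin N)
      (fun p => if chain p.2 (p.1 y) ≠ chain p.2 (p.1 z) then 1 else 0) _
      (fun p => by rw [← chain_cons, ← chain_cons]; rfl), Fintype.sum_prod_type]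
    simp only [← card_filter, hfirst]
    rw [← sum_filter, sum_const, smul_eq_mul, card_filter_apply_ne_apply hyz,
      Fintype.card_fin, pow_succ, mul_comm]

theorem card_filter_chain_ne_div_card {N : ℕ} (k : ℕ) {y z : Fin N} (hyz : y ≠ z) :
    (#{h : Fin k → Fin N → Fin N | chain h y ≠ chain h z} : ℝ) /
      Fintype.card (Fin k → Fin N → Fin N) = (1 - 1 / (N : ℝ)) ^ k := by
  have hN : (N : ℝ) ≠ 0 := by simpa using y.pos.ne'
  have hpow : (N : ℝ) ^ N = N * N ^ (N - 1) := by
    rw [← pow_succ', Nat.sub_add_cancel y.pos]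
  rw [card_filter_chain_ne k hyz]
  simp only [Fintype.card_fun, Fintype.card_fin]
  push_cast [Nat.cast_pred y.pos]
  rw [← div_pow, hpow]
  congr 1
  field_simp

theorem card_filter_chain_eq_div_card {N : ℕ} (k : ℕ) (y z : Fin N) :
    (#{h : Fin k → Fin N → Fin N | chain h y = chain h z} : ℝ) /
      Fintype.card (Fin k → Fin N → Fin N) =
      if y = z then 1 else 1 - (1 - 1 / (N : ℝ)) ^ k := by
  have hcard : (Fintype.card (Fin k → Fin N → Fin N) : ℝ) ≠ 0 := by
    have : Nonempty (Fin N) := ⟨y⟩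
    exact_mod_cast Fintype.card_ne_zero
  split_ifs with hyz
  · simp [hyz]
  · have hsplit : (#{h : Fin k → Fin N → Fin N | chain h y = chain h z} : ℝ)
        = Fintype.card (Fin k → Fin N → Fin N) -
          #{h : Fin k → Fin N → Fin N | chain h y ≠ chain h z} := by
      rw [eq_sub_iff_add_eq]
      exact_mod_cast card_filter_add_card_filter_not (s := univ) _
    rw [← card_filter_chain_ne_div_card k hyz, hsplit, sub_div, div_self hcard]

theorem sum_numPreimages_div_card {N : ℕ} (k : ℕ) (x : Fin N) :
    (∑ h : Fin k → Fin N → Fin N, (numPreimages h x : ℝ)) /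
      Fintype.card (Fin k → Fin N → Fin N) =
      1 + ((N : ℝ) - 1) * (1 - (1 - 1 / (N : ℝ)) ^ k) := by
  have hcount : ∑ h : Fin k → Fin N → Fin N, numPreimages h x
      = ∑ x' : Fin N, #{h : Fin k → Fin N → Fin N | chain h x' = chain h x} := by
    simp only [numPreimages, card_filter]
    exact sum_comm
  rw [← Nat.cast_sum, hcount, Nat.cast_sum, sum_div]
  simp only [card_filter_chain_eq_div_card, sum_ite, sum_const, filter_eq', filter_ne',
    mem_univ, if_true, card_singleton, card_erase_of_mem, card_univ, Fintype.card_fin]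
  rw [nsmul_eq_mul, nsmul_eq_mul, Nat.cast_pred x.pos]
  ring

theorem geom_sum_one_sub_one_div {K : Type*} [Field K] {a : K} (ha : a ≠ 0) (k : ℕ) :
    ∑ i ∈ range (k + 1), (1 - 1 / a) ^ i = 1 + (a - 1) * (1 - (1 - 1 / a) ^ k) := by
  rw [geom_sum_succ, ← mul_neg_geom_sum]
  field_simp
  ring

theorem geom_sum_le_card {R : Type*} [CommRing R] [LinearOrder R] [IsStrictOrderedRing R] {q : R}
    (hq0 : 0 ≤ q) (hq1 : q ≤ 1) (n : ℕ) : ∑ i ∈ range n, q ^ i ≤ n := by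
  simpa using sum_le_card_nsmul (range n) (q ^ ·) 1 fun _ _ => pow_le_one₀ hq0 hq1

theorem add_one_sub_sq_mul_le_geom_sum {R : Type*} [CommRing R] [LinearOrder R]
    [IsStrictOrderedRing R] {t : R} (ht0 : 0 ≤ t) (ht2 : t ≤ 2) (k : ℕ) :
    k + 1 - k ^ 2 * t ≤ ∑ i ∈ range (k + 1), (1 - t) ^ i := by
  induction k with
  | zero => simp
  | succ k ih =>
    have hbernoulli : 1 + (k + 1 : ℕ) * -t ≤ (1 + -t) ^ (k + 1) :=
      one_add_mul_le_pow (neg_le_neg ht2) (k + 1)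
    rw [← sub_eq_add_neg] at hbernoulli
    rw [sum_range_succ]
    push_cast at hbernoulli ⊢
    nlinarith [mul_nonneg (Nat.cast_nonneg (α := R) k) ht0]

theorem stmt8_general (N k : ℕ) (x : Fin N) :
    ((∑ h : Fin k → Fin N → Fin N, (numPreimages h x : ℝ)) /
        (Fintype.card (Fin k → Fin N → Fin N))
      = 1 + ((N : ℝ) - 1) * (1 - (1 - 1 / (N : ℝ)) ^ k)) ∧
    (k : ℝ) + 1 - (k : ℝ) ^ 2 / N ≤
      (∑ h : Fin k → Fin N → Fin N, (numPreimages h x : ℝ)) /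
        (Fintype.card (Fin k → Fin N → Fin N)) ∧
    (∑ h : Fin k → Fin N → Fin N, (numPreimages h x : ℝ)) /
        (Fintype.card (Fin k → Fin N → Fin N)) ≤ (k : ℝ) + 1 := by
  have hN : (1 : ℝ) ≤ N := by exact_mod_cast x.pos
  have hexpect := sum_numPreimages_div_card k x
  have hgeom := geom_sum_one_sub_one_div (a := (N : ℝ)) (by positivity) k
  refine ⟨hexpect, ?_, ?_⟩ <;> rw [hexpect, ← hgeom]
  · have := add_one_sub_sq_mul_le_geom_sum (t := 1 / (N : ℝ)) (by positivity)
      (by rw [div_le_iff₀ (by positivity)]; linarith) k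
    rwa [mul_one_div] at this
  · have := geom_sum_le_card (q := 1 - 1 / (N : ℝ))
      (by rw [sub_nonneg, div_le_one₀ (by positivity)]; exact hN) (by simp) (k + 1)
    rwa [Nat.cast_succ] at this

/-- Let `h₁,...,h_k : [N] → [N]` be independent uniformly
random functions and fix `x ∈ [N]`.  Let `L` be the number of preimages of
`h_{[1,k]}(x)` under `h_{[1,k]}`.  Then
`E[L] = 1 + (N−1)(1 − (1−1/N)^k)`; in particular `E[L] ≥ k + 1 − k²/N` and
`E[L] ≤ k + 1`. -/
theorem stmt8 (N k : ℕ) (hN : 0 < N) (x : Fin N) :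
    ((∑ h : Fin k → Fin N → Fin N, (numPreimages h x : ℝ)) /
        (Fintype.card (Fin k → Fin N → Fin N))
      = 1 + ((N : ℝ) - 1) * (1 - (1 - 1 / (N : ℝ)) ^ k)) ∧
    (k : ℝ) + 1 - (k : ℝ) ^ 2 / N ≤
      (∑ h : Fin k → Fin N → Fin N, (numPreimages h x : ℝ)) /
        (Fintype.card (Fin k → Fin N → Fin N)) ∧
    (∑ h : Fin k → Fin N → Fin N, (numPreimages h x : ℝ)) /
        (Fintype.card (Fin k → Fin N → Fin N)) ≤ (k : ℝ) + 1 :=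
  stmt8_general N k x
end

section
/- Let α_k ∈ (0,1] be defined by α₁ = 1 and α_{k+1} = 1 − e^{−α_k}. Then for all k ≥ 1, α_k ≤ 2/k, and moreover k·α_k → 2 as k → ∞. -/
/-!
Passing to reciprocals linearises the recursion: `1/α_{k+1} - 1/α_k = φ(α_k)` with
`φ(x) = 1/(1 - e^{-x}) - 1/x`, and `φ(x) ≥ 1/2` for all `x > 0` (from `e^x ≤ (2+x)/(2-x)`)
while `φ(x) → 1/2` as `x → 0⁺`. The lower bound gives `1/α_k ≥ (k+1)/2`, hence `α_k ≤ 2/k`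
and `α_k → 0`; then the increments of `1/α_k` tend to `1/2`, so by Cesàro `1/(k α_k) → 1/2`.
-/

open Real Filter Topology

namespace Real

theorem two_sub_div_two_add_le_exp_neg {x : ℝ} (hx : 0 ≤ x) :
    (2 - x) / (2 + x) ≤ exp (-x) := by
  rcases lt_or_ge x 2 with hx2 | hx2
  · rw [exp_neg, ← inv_div]
    exact inv_anti₀ (by positivity) (exp_le_two_add_div_two_sub hx hx2)
  · exact (div_nonpos_of_nonpos_of_nonneg (by linarith) (by linarith)).trans (exp_pos _).le

theorem exp_neg_le_one_sub_add_sq_div_two {x : ℝ} (hx : 0 ≤ x) :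
    exp (-x) ≤ 1 - x + x ^ 2 / 2 := by
  have hq := quadratic_le_exp_of_nonneg hx
  -- `(1 + x + x²/2)(1 - x + x²/2) = 1 + x⁴/4`
  have hprod : 1 ≤ exp x * (1 - x + x ^ 2 / 2) := by
    nlinarith [mul_le_mul_of_nonneg_right hq (by nlinarith : (0 : ℝ) ≤ 1 - x + x ^ 2 / 2),
      pow_nonneg hx 4]
  rw [exp_neg]
  exact (inv_le_iff_one_le_mul₀' (exp_pos x)).2 hprod

theorem half_le_inv_one_sub_exp_neg_sub_inv {x : ℝ} (hx : 0 < x) :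
    1 / 2 ≤ (1 - exp (-x))⁻¹ - x⁻¹ := by
  have hpos : 0 < 1 - exp (-x) := by
    rw [sub_pos, exp_lt_one_iff, neg_lt_zero]; exact hx
  have hle : 1 - exp (-x) ≤ 2 * x / (2 + x) := by
    have h := two_sub_div_two_add_le_exp_neg hx.le
    have hsplit : 2 * x / (2 + x) = 1 - (2 - x) / (2 + x) := by field_simp; ring
    linarith
  calc 1 / 2 = (2 * x / (2 + x))⁻¹ - x⁻¹ := by field_simp; ring
    _ ≤ (1 - exp (-x))⁻¹ - x⁻¹ := by gcongr

theorem inv_one_sub_exp_neg_sub_inv_le {x : ℝ} (hx0 : 0 < x) (hx2 : x < 2) :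
    (1 - exp (-x))⁻¹ - x⁻¹ ≤ (2 - x)⁻¹ := by
  have hle : x * (2 - x) / 2 ≤ 1 - exp (-x) := by
    nlinarith [exp_neg_le_one_sub_add_sq_div_two hx0.le]
  have hpos : 0 < x * (2 - x) / 2 := by
    have : 0 < 2 - x := by linarith
    positivity
  calc (1 - exp (-x))⁻¹ - x⁻¹ ≤ (x * (2 - x) / 2)⁻¹ - x⁻¹ := by gcongr
    _ = (2 - x)⁻¹ := by
      have : 2 - x ≠ 0 := by linarith
      field_simp; ring

theorem tendsto_inv_one_sub_exp_neg_sub_inv :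
    Tendsto (fun x => (1 - exp (-x))⁻¹ - x⁻¹) (𝓝[>] 0) (𝓝 (1 / 2)) := by
  have hup : Tendsto (fun x : ℝ => (2 - x)⁻¹) (𝓝[>] 0) (𝓝 (1 / 2)) := by
    have h := (tendsto_const_nhds (x := (2 : ℝ)) |>.sub (tendsto_id (x := 𝓝 (0 : ℝ)))).inv₀
      (by norm_num)
    norm_num at h
    exact tendsto_nhdsWithin_of_tendsto_nhds h
  refine tendsto_of_tendsto_of_tendsto_of_le_of_le' tendsto_const_nhds hup ?_ ?_
  · filter_upwards [self_mem_nhdsWithin] with x hx using half_le_inv_one_sub_exp_neg_sub_inv hx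
  · filter_upwards [Ioo_mem_nhdsGT (show (0 : ℝ) < 2 by norm_num)] with x hx
      using inv_one_sub_exp_neg_sub_inv_le hx.1 hx.2

end Real

theorem tendsto_div_natCast_of_tendsto_sub {u : ℕ → ℝ} {l : ℝ}
    (h : Tendsto (fun n => u (n + 1) - u n) atTop (𝓝 l)) :
    Tendsto (fun n => u n / n) atTop (𝓝 l) := by
  have hmean : Tendsto (fun n : ℕ => (n : ℝ)⁻¹ * (u n - u 0)) atTop (𝓝 l) := by
    simpa only [Finset.sum_range_sub] using h.cesaro
  simpa using (hmean.add (tendsto_const_div_atTop_nhds_zero_nat (u 0))).congr fun n => by ring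

section Recursion

variable {α : ℕ → ℝ}

theorem pos_of_eq_one_sub_exp_neg (h1 : α 1 = 1)
    (hrec : ∀ k, 1 ≤ k → α (k + 1) = 1 - exp (-α k)) : ∀ k, 1 ≤ k → 0 < α k := by
  intro k hk
  induction k, hk using Nat.le_induction with
  | base => rw [h1]; exact one_pos
  | succ k hk ih => rw [hrec k hk, sub_pos, exp_lt_one_iff, neg_lt_zero]; exact ih

theorem succ_div_two_le_inv_of_eq_one_sub_exp_neg (h1 : α 1 = 1)
    (hrec : ∀ k, 1 ≤ k → α (k + 1) = 1 - exp (-α k)) :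
    ∀ k : ℕ, 1 ≤ k → ((k : ℝ) + 1) / 2 ≤ (α k)⁻¹ := by
  intro k hk
  induction k, hk using Nat.le_induction with
  | base => rw [h1]; norm_num
  | succ k hk ih =>
    have hstep :=
      half_le_inv_one_sub_exp_neg_sub_inv (pos_of_eq_one_sub_exp_neg h1 hrec k hk)
    rw [hrec k hk]
    push_cast
    linarith

theorem le_two_div_of_eq_one_sub_exp_neg (h1 : α 1 = 1)
    (hrec : ∀ k, 1 ≤ k → α (k + 1) = 1 - exp (-α k)) :
    ∀ k, 1 ≤ k → α k ≤ 2 / k := by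
  intro k hk
  have hk0 : (0 : ℝ) < k / 2 := by positivity
  have hinv := succ_div_two_le_inv_of_eq_one_sub_exp_neg h1 hrec k hk
  calc α k = ((α k)⁻¹)⁻¹ := (inv_inv _).symm
    _ ≤ ((k : ℝ) / 2)⁻¹ := inv_anti₀ hk0 (by linarith)
    _ = 2 / k := inv_div _ _

end Recursion

/-- Let `α_k ∈ (0,1]` be defined by `α₁ = 1` and
`α_{k+1} = 1 − e^{−α_k}`.  Then for all `k ≥ 1`, `α_k ≤ 2/k`, and moreover
`k·α_k → 2` as `k → ∞`. -/
theorem stmt10 (α : ℕ → ℝ) (h1 : α 1 = 1)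
    (hrec : ∀ k, 1 ≤ k → α (k + 1) = 1 - Real.exp (-α k)) :
    (∀ k, 1 ≤ k → α k ≤ 2 / k) ∧
      Filter.Tendsto (fun k : ℕ => (k : ℝ) * α k) Filter.atTop (nhds 2) := by
  have hpos := pos_of_eq_one_sub_exp_neg h1 hrec
  have hbound := le_two_div_of_eq_one_sub_exp_neg h1 hrec
  have hα : Tendsto α atTop (𝓝[>] 0) := by
    refine tendsto_nhdsWithin_iff.2 ⟨?_, eventually_atTop.2 ⟨1, hpos⟩⟩
    refine tendsto_of_tendsto_of_tendsto_of_le_of_le' tendsto_const_nhds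
      (tendsto_const_div_atTop_nhds_zero_nat 2) ?_ ?_
    · filter_upwards [eventually_ge_atTop 1] with k hk using (hpos k hk).le
    · filter_upwards [eventually_ge_atTop 1] with k hk using hbound k hk
  have hdiff : Tendsto (fun k => (α (k + 1))⁻¹ - (α k)⁻¹) atTop (𝓝 (1 / 2)) := by
    refine (tendsto_inv_one_sub_exp_neg_sub_inv.comp hα).congr' ?_
    filter_upwards [eventually_ge_atTop 1] with k hk
    simp only [Function.comp_apply, hrec k hk]
  refine ⟨hbound, ?_⟩
  have hratio := tendsto_div_natCast_of_tendsto_sub (u := fun k => (α k)⁻¹) hdiff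
  simpa [inv_div, div_inv_eq_mul] using hratio.inv₀ (by norm_num)
end

section
/- For the expected-cost functional C(c₁,...,c_q) = Σ_{i=1}^{q+1} ∫_{c_{i−1}}^{c_i} (c_i − t)p(t)dt (with c₀ = 0 and c_{q+1} = ℓ), if p is continuously differentiable and positive on (0,ℓ) and (c₁,...,c_q) with 0 < c₁ < ⋯ < c_q < ℓ is an interior minimizer, then for each i ∈ {1,...,q}, (F(c_i) − F(c_{i−1}))/p(c_i) = c_{i+1} − c_i, where F is the cdf of p and F(c₀) = 0, c_{q+1} = ℓ. -/
/-- The extended checkpoint sequence: `ext q ℓ c 0 = 0`,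
`ext q ℓ c i = c_(i-1)` for `1 ≤ i ≤ q`, and `ext q ℓ c (q+1) = ℓ`. -/
def ext (q : ℕ) (ℓ : ℝ) (c : Fin q → ℝ) (j : ℕ) : ℝ :=
  if h : 0 < j ∧ j ≤ q then c ⟨j - 1, by omega⟩ else if j = 0 then 0 else ℓ

/-- The expected-cost functional
`C(c₁,...,c_q) = Σ_{i=1}^{q+1} ∫_{c_{i−1}}^{c_i} (c_i − t)p(t)dt`
(with `c₀ = 0` and `c_{q+1} = ℓ`). -/
noncomputable def cost (q : ℕ) (ℓ : ℝ) (p : ℝ → ℝ) (c : Fin q → ℝ) : ℝ :=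
  ∑ i ∈ Finset.range (q + 1),
    ∫ t in ext q ℓ c i..ext q ℓ c (i + 1), (ext q ℓ c (i + 1) - t) * p t

/-!
Moving the single checkpoint `c_i` to `x` changes only the two segments adjacent to it:
`x ↦ ∫_{c_{i-1}}^x (x - t) p t` has derivative `∫_{c_{i-1}}^x p = F(x) - F(c_{i-1})`, and
`x ↦ ∫_x^{c_{i+1}} (c_{i+1} - t) p t` has derivative `-(c_{i+1} - x) p x`. At a local minimum the
sum of the two vanishes at `x = c_i`, and `p (c_i) > 0` lets us divide.
-/

open Function

noncomputable def segmentCost (p : ℝ → ℝ) (e : ℕ → ℝ) (j : ℕ) : ℝ :=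
  ∫ t in e j..e (j + 1), (e (j + 1) - t) * p t

lemma cost_eq_sum_segmentCost (q : ℕ) (ℓ : ℝ) (p : ℝ → ℝ) (c : Fin q → ℝ) :
    cost q ℓ p c = ∑ j ∈ Finset.range (q + 1), segmentCost p (ext q ℓ c) j :=
  rfl

lemma ext_of_mem_Icc {q : ℕ} (ℓ : ℝ) (c : Fin q → ℝ) {i : ℕ} (hi1 : 1 ≤ i) (hiq : i ≤ q) :
    ext q ℓ c i = c ⟨i - 1, by omega⟩ := by
  rw [ext, dif_pos ⟨hi1, hiq⟩]

lemma ext_update {q : ℕ} (ℓ : ℝ) (c : Fin q → ℝ) {i : ℕ} (hi1 : 1 ≤ i) (hiq : i ≤ q) (x : ℝ) :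
    ext q ℓ (update c ⟨i - 1, by omega⟩ x) = update (ext q ℓ c) i x := by
  funext j
  by_cases hj : 0 < j ∧ j ≤ q
  · have hfin : ((⟨j - 1, by omega⟩ : Fin q) = ⟨i - 1, by omega⟩) ↔ j = i := by
      rw [Fin.mk.injEq]; omega
    simp only [ext, dif_pos hj, update_apply, hfin]
  · have hji : j ≠ i := by omega
    simp only [ext, dif_neg hj, update_of_ne hji]

lemma hasDerivAt_integral_sub_mul {p : ℝ → ℝ} (hp : Continuous p) (a x : ℝ) :
    HasDerivAt (fun y => ∫ t in a..y, (y - t) * p t) (∫ t in a..x, p t) x := by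
  have hF : HasDerivAt (fun y => ∫ t in a..y, p t) (p x) x :=
    hp.integral_hasStrictDerivAt a x |>.hasDerivAt
  have hG : HasDerivAt (fun y => ∫ t in a..y, t * p t) (x * p x) x :=
    (continuous_id.mul hp).integral_hasStrictDerivAt a x |>.hasDerivAt
  have hsplit : (fun y => ∫ t in a..y, (y - t) * p t)
      = fun y => y * (∫ t in a..y, p t) - ∫ t in a..y, t * p t := by
    funext y
    rw [← intervalIntegral.integral_const_mul, ← intervalIntegral.integral_sub
      ((continuous_const.mul hp).intervalIntegrable (u := fun t => y * p t) a y)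
      ((continuous_id.mul hp).intervalIntegrable (u := fun t => t * p t) a y)]
    simp only [sub_mul]
  rw [hsplit]
  exact ((hasDerivAt_id x).mul hF |>.sub hG).congr_deriv (by simp)

lemma hasDerivAt_segmentCost_update {p : ℝ → ℝ} (hp : Continuous p) (e : ℕ → ℝ) {i : ℕ}
    (hi : 0 < i) (j : ℕ) :
    HasDerivAt (fun x => segmentCost p (update e i x) j)
      ((if j = i - 1 then ∫ t in e (i - 1)..e i, p t else 0) +
        if j = i then -((e (i + 1) - e i) * p (e i)) else 0) (e i) := by
  by_cases hleft : j = i - 1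
  · have hj : j ≠ i := by omega
    have hj1 : j + 1 = i := by omega
    simp only [segmentCost, update_of_ne hj, hj1, update_self, if_pos hleft, if_neg hj, add_zero]
    rw [hleft]
    exact hasDerivAt_integral_sub_mul hp _ _
  by_cases hright : j = i
  · subst hright
    have hj1 : j + 1 ≠ j := by omega
    simp only [segmentCost, update_self, update_of_ne hj1, if_neg hleft, if_true, zero_add]
    have hf : Continuous fun t => (e (j + 1) - t) * p t :=
      (continuous_const.sub continuous_id).mul hp
    exact intervalIntegral.integral_hasDerivAt_left (hf.intervalIntegrable _ _)
      (hf.stronglyMeasurableAtFilter _ _) hf.continuousAt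
  · have hj1 : j + 1 ≠ i := by omega
    simp only [segmentCost, update_of_ne hright, update_of_ne hj1, if_neg hleft, if_neg hright,
      add_zero]
    exact hasDerivAt_const _ _

lemma hasDerivAt_sum_segmentCost_update {p : ℝ → ℝ} (hp : Continuous p) (e : ℕ → ℝ)
    {i n : ℕ} (hi : 0 < i) (hin : i < n) :
    HasDerivAt (fun x => ∑ j ∈ Finset.range n, segmentCost p (update e i x) j)
      ((∫ t in e (i - 1)..e i, p t) - (e (i + 1) - e i) * p (e i)) (e i) := by
  refine (HasDerivAt.fun_sum fun j _ => hasDerivAt_segmentCost_update hp e hi j).congr_deriv ?_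
  rw [Finset.sum_add_distrib, Finset.sum_ite_eq', Finset.sum_ite_eq',
    if_pos (Finset.mem_range.mpr (by omega)), if_pos (Finset.mem_range.mpr hin)]
  ring

/-- If `p` is continuously differentiable and positive on
`(0,ℓ)` and `(c₁,...,c_q)` with `0 < c₁ < ⋯ < c_q < ℓ` is an interior (local)
minimizer of the expected-cost functional, then for each `i ∈ {1,...,q}`,
`(F(c_i) − F(c_{i−1}))/p(c_i) = c_{i+1} − c_i`, where `F(x) = ∫₀^x p` is the
cdf of `p`, `F(c₀) = F(0) = 0` and `c_{q+1} = ℓ`. -/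
theorem stmt13 (q : ℕ) (hq : 0 < q) (ℓ : ℝ)
    (p : ℝ → ℝ) (hp : ContDiff ℝ 1 p) (hpos : ∀ t ∈ Set.Ioo 0 ℓ, 0 < p t)
    (c : Fin q → ℝ) (hc : StrictMono c)
    (hc0 : 0 < c ⟨0, hq⟩) (hcq : c ⟨q - 1, by omega⟩ < ℓ)
    (hmin : IsLocalMin (cost q ℓ p) c) :
    ∀ i ∈ Finset.Icc 1 q,
      ((∫ s in (0 : ℝ)..ext q ℓ c i, p s) - ∫ s in (0 : ℝ)..ext q ℓ c (i - 1), p s) /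
          p (ext q ℓ c i)
        = ext q ℓ c (i + 1) - ext q ℓ c i := by
  intro i hi
  obtain ⟨hi1, hiq⟩ := Finset.mem_Icc.mp hi
  have hpc : Continuous p := hp.continuous
  set k : Fin q := ⟨i - 1, by omega⟩
  have hck : ext q ℓ c i = c k := ext_of_mem_Icc ℓ c hi1 hiq
  have hpk : 0 < p (ext q ℓ c i) := hck ▸ hpos (c k)
    ⟨hc0.trans_le (hc.monotone (Fin.mk_le_mk.mpr (Nat.zero_le _))),
      (hc.monotone (Fin.mk_le_mk.mpr (by omega))).trans_lt hcq⟩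
  have hcrit : HasDerivAt (fun x => cost q ℓ p (update c k x))
      ((∫ t in ext q ℓ c (i - 1)..ext q ℓ c i, p t) -
        (ext q ℓ c (i + 1) - ext q ℓ c i) * p (ext q ℓ c i)) (c k) := by
    simp only [cost_eq_sum_segmentCost, k, ext_update ℓ c hi1 hiq, ← hck]
    exact hasDerivAt_sum_segmentCost_update hpc _ (by omega) (by omega)
  have hlocal : IsLocalMin (fun x => cost q ℓ p (update c k x)) (c k) :=
    (update_eq_self k c).symm ▸ hmin |>.comp_continuous
      (continuous_const.update k continuous_id).continuousAt
  rw [intervalIntegral.integral_interval_sub_left (hpc.intervalIntegrable _ _)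
    (hpc.intervalIntegrable _ _), div_eq_iff hpk.ne', ← sub_eq_zero]
  exact hlocal.hasDerivAt_eq_zero hcrit
end
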